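/- arXiv:math/0303386 — 2 statements merged into one kernel-verified Lean document; each statement's English description precedes it below -/
import Mathlib

section
/- Let ε > 0 and a ∈ Σ, and let T(n,a,ε) be the number of cyclically reduced words w of length n such that w_a/n ∈ (1/(2k) − ε/2, 1/(2k) + ε/2). Then T(n,a,ε)/γ(n,C) → 1 as n → ∞, and the convergence is exponentially fast (there exist K > 0 and 0 < σ < 1 with |1 − T(n,a,ε)/γ(n,C)| ≤ K σ^n). -/
/-! Common definitions: free group `FG k = F(a_1,…,a_k)`, reduced and cyclically
reduced words, Whitehead automorphisms, strict minimality, counting functions and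
exponential genericity, following Kapovich–Schupp–Shpilrain. -/

/-- The free group of rank `k` on the basis `a_1,…,a_k`. -/
abbrev FG (k : ℕ) := FreeGroup (Fin k)

/-- The alphabet `Σ = {a_1,…,a_k}^{±1}`: a letter is a basis index together with a sign. -/
abbrev Letter (k : ℕ) := Fin k × Bool

/-- The inverse of a letter. -/
def linv {k : ℕ} (x : Letter k) : Letter k := (x.1, !x.2)

/-- The length `|g|` of the reduced word representing `g`. -/
def wordLength {k : ℕ} (g : FG k) : ℕ := (FreeGroup.toWord g).length

/-- A word is (freely) reduced if it equals its free reduction. -/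
def ReducedWord {k : ℕ} (w : List (Letter k)) : Prop := FreeGroup.reduce w = w

/-- A word is cyclically reduced if all of its cyclic permutations are reduced;
equivalently, `w ++ w` is reduced. -/
def CyclicallyReducedWord {k : ℕ} (w : List (Letter k)) : Prop :=
  FreeGroup.reduce (w ++ w) = w ++ w

/-- An element of `FG k` is cyclically reduced if its reduced word is. -/
def IsCyclicallyReduced {k : ℕ} (g : FG k) : Prop :=
  CyclicallyReducedWord (FreeGroup.toWord g)

/-- `C`, the set of all cyclically reduced elements of `FG k`. -/
def Cset (k : ℕ) : Set (FG k) := {g | IsCyclicallyReduced g}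

/-- The cyclic length `‖g‖`: the length of the cyclically reduced form of `g`
(the unique cyclically reduced `u` with `g = x u x⁻¹`). -/
noncomputable def cyclicLength {k : ℕ} (g : FG k) : ℕ :=
  sInf {n | ∃ x u : FG k, IsCyclicallyReduced u ∧ g = x * u * x⁻¹ ∧ wordLength u = n}

/-- The set `Σ = {a_1,…,a_k}^{±1}` inside the free group. -/
def letterSet (k : ℕ) : Set (FG k) :=
  {g | ∃ i : Fin k, g = FreeGroup.of i ∨ g = (FreeGroup.of i)⁻¹}

/-- A Whitehead automorphism of the first kind: a relabeling automorphism,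
i.e. one whose restriction to `Σ` is a permutation of `Σ`. -/
def IsRelabeling {k : ℕ} (τ : MulAut (FG k)) : Prop :=
  (⇑τ) '' letterSet k = letterSet k

/-- A Whitehead automorphism of the second kind, with multiplier `a ∈ Σ`:
`τ a = a` and `τ x ∈ {x, xa, a⁻¹x, a⁻¹xa}` for all `x ∈ Σ`. -/
def IsWhitehead2 {k : ℕ} (τ : MulAut (FG k)) : Prop :=
  ∃ a ∈ letterSet k, τ a = a ∧
    ∀ x ∈ letterSet k, τ x = x ∨ τ x = x * a ∨ τ x = a⁻¹ * x ∨ τ x = a⁻¹ * x * a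

/-- An automorphism is inner if it is conjugation by some element. -/
def IsInner {k : ℕ} (α : MulAut (FG k)) : Prop := ∃ g : FG k, α = MulAut.conj g

/-- `SM`: the set of strictly minimal cyclically reduced elements, those `w` with
`‖τ w‖ > |w|` for every non-inner Whitehead automorphism `τ` of the second kind. -/
def SM (k : ℕ) : Set (FG k) :=
  {w | IsCyclicallyReduced w ∧
    ∀ τ : MulAut (FG k), IsWhitehead2 τ → ¬ IsInner τ → wordLength w < cyclicLength (τ w)}

/-- `SM'`: elements whose cyclically reduced form lies in `SM`. -/
def SM' (k : ℕ) : Set (FG k) := {g | ∃ x u : FG k, u ∈ SM k ∧ g = x * u * x⁻¹}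

/-- `γ(n,S)`: the number of elements of `S` of length `n`. -/
noncomputable def gammaC {k : ℕ} (S : Set (FG k)) (n : ℕ) : ℕ :=
  {g ∈ S | wordLength g = n}.ncard

/-- `ρ(n,S)`: the number of elements of `S` of length at most `n`. -/
noncomputable def rhoC {k : ℕ} (S : Set (FG k)) (n : ℕ) : ℕ :=
  {g ∈ S | wordLength g ≤ n}.ncard

/-- `B ⊆ S` is exponentially generic in `S` if `ρ(n,B)/ρ(n,S) → 1`
exponentially fast. -/
def ExpGenericIn {k : ℕ} (B S : Set (FG k)) : Prop :=
  B ⊆ S ∧ ∃ K : ℝ, 0 < K ∧ ∃ σ : ℝ, 0 < σ ∧ σ < 1 ∧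
    ∀ n : ℕ, |1 - (rhoC B n : ℝ) / (rhoC S n : ℝ)| ≤ K * σ ^ n

/-- `B` is exponentially negligible in `S` if `S \ B` is exponentially generic in `S`. -/
def ExpNegligibleIn {k : ℕ} (B S : Set (FG k)) : Prop := ExpGenericIn (S \ B) S

/-- The orbit `Aut(F_k) w`. -/
def autOrbit {k : ℕ} (w : FG k) : Set (FG k) := {g | ∃ α : MulAut (FG k), α w = g}

/-- `u` is a cyclic permutation of `v`: the reduced word of `u` is a rotation of
the reduced word of `v`. -/
def IsCyclicPerm {k : ℕ} (u v : FG k) : Prop :=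
  ∃ n : ℕ, FreeGroup.toWord u = (FreeGroup.toWord v).rotate n

/-- `w` is a proper power: `w = uⁿ` for some `n ≥ 2`. -/
def IsProperPower {k : ℕ} (w : FG k) : Prop := ∃ (u : FG k) (n : ℕ), 2 ≤ n ∧ w = u ^ n

/-- `TS`: strictly minimal cyclically reduced `w` which are not proper powers and
are not conjugate to `τ w` for any nontrivial relabeling automorphism `τ`. -/
def TS (k : ℕ) : Set (FG k) :=
  {w | w ∈ SM k ∧ ¬ IsProperPower w ∧
    ∀ τ : MulAut (FG k), IsRelabeling τ → τ ≠ 1 → ¬ IsConj (τ w) w}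

/-- `TS'`: elements whose cyclically reduced form lies in `TS`. -/
def TS' (k : ℕ) : Set (FG k) := {g | ∃ x u : FG k, u ∈ TS k ∧ g = x * u * x⁻¹}

/-- `Z`: elements of `TS` such that no relabeling automorphism sends `w` to a cyclic
permutation of `w⁻¹`. -/
def Zset (k : ℕ) : Set (FG k) :=
  {w | w ∈ TS k ∧ ¬ ∃ τ : MulAut (FG k), IsRelabeling τ ∧ IsCyclicPerm (τ w) w⁻¹}

/-- Growth entropy `H(S) = limsup ρ(n,S)^{1/n}`. -/
noncomputable def entropyH {k : ℕ} (S : Set (FG k)) : ℝ :=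
  Filter.limsup (fun n : ℕ => (rhoC S n : ℝ) ^ ((n : ℝ)⁻¹)) Filter.atTop

/-- Number of occurrences of the two-letter word `xy` as a subword of `w`. -/
def countPair {k : ℕ} (w : List (Letter k)) (x y : Letter k) : ℕ :=
  (w.zip w.tail).count (x, y)

/-- The label `ŵ_{xy}` of the edge `[x⁻¹, y]` in the weighted Whitehead graph of the
cyclically reduced word `w`: occurrences of `xy` and of `y⁻¹x⁻¹` in `wc`, where `c` is
the first letter of `w`. -/
def whLabel {k : ℕ} (w : List (Letter k)) (x y : Letter k) : ℕ :=
  countPair (w ++ w.take 1) x y + countPair (w ++ w.take 1) (linv y) (linv x)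

/-- The one-relator group `G_u = ⟨a_1,…,a_k ∣ u = 1⟩`. -/
abbrev OneRel (k : ℕ) (u : FG k) := FG k ⧸ Subgroup.normalClosure ({u} : Set (FG k))

/-- `u` is primitive: it belongs to some free basis of `FG k`, equivalently it is the
image of a basis element under an automorphism. -/
def IsPrimitive {k : ℕ} (u : FG k) : Prop :=
  ∃ (α : MulAut (FG k)) (i : Fin k), α (FreeGroup.of i) = u

namespace KSS

variable {k : ℕ}

/-- adjacency relation for reduced words -/
def R (x y : Letter k) : Prop := y ≠ linv x

instance : DecidableRel (R (k := k)) := fun x y => by unfold R; infer_instance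

lemma linv_linv (x : Letter k) : linv (linv x) = x := by
  simp [linv]

lemma eq_linv_comm {x y : Letter k} : x = linv y ↔ y = linv x := by
  constructor <;> (rintro rfl; rw [linv_linv])

lemma R_symm {x y : Letter k} (h : R x y) : R y x := by
  unfold R at *; exact fun hc => h (eq_linv_comm.mp hc)

lemma cond_iff (x hd : Letter k) : (x.1 = hd.1 ∧ x.2 = !hd.2) ↔ x = linv hd := by
  simp [linv, Prod.ext_iff]

lemma reduce_eq_self_iff (L : List (Letter k)) :
    FreeGroup.reduce L = L ↔ List.IsChain R L := by
  constructor
  · intro h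
    induction L with
    | nil => exact List.isChain_nil
    | cons x L ih =>
      rw [FreeGroup.reduce.cons] at h
      rcases hr : FreeGroup.reduce L with _ | ⟨hd, tl⟩
      · rw [hr] at h
        have hLnil : L = [] := by
          have := congrArg List.length h
          simpa using this.symm
        subst hLnil; exact List.isChain_singleton x
      · rw [hr] at h
        change (if x.1 = hd.1 ∧ x.2 = !hd.2 then tl else x :: hd :: tl) = x :: L at h
        by_cases hc : x.1 = hd.1 ∧ x.2 = !hd.2
        · rw [if_pos hc] at h
          -- h : tl = x :: L, but reduce L = hd :: tl has length ≤ length L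
          have hlen := FreeGroup.Red.length_le (FreeGroup.reduce.red (L := L))
          rw [hr, h] at hlen
          simp at hlen
        · rw [if_neg hc] at h
          have hL : L = hd :: tl := by
            have := congrArg List.tail h
            simpa using this.symm
          have hred : FreeGroup.reduce L = L := by rw [hr, hL]
          have := ih hred
          rw [hL]
          refine List.isChain_cons_cons.mpr ⟨?_, by rwa [hL] at this⟩
          unfold R
          exact fun hc' => hc ((cond_iff x hd).mpr (eq_linv_comm.mpr hc'))
  · intro h
    induction L with
    | nil => rfl
    | cons x L ih =>
      have hL : List.IsChain R L := h.tail
      rw [FreeGroup.reduce.cons, ih hL]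
      cases L with
      | nil => rfl
      | cons hd tl =>
        simp only
        rw [if_neg]
        intro hc
        have hR : R x hd := List.isChain_cons_cons.mp h |>.1
        exact hR (eq_linv_comm.mp ((cond_iff x hd).mp hc))

end KSS
open Finset in
variable {k : ℕ}

namespace KSS

/-- Finset of all reduced words of length `n`, built by prepending letters. -/
def words (k : ℕ) : ℕ → Finset (List (Letter k))
  | 0 => {[]}
  | n+1 => (words k n).biUnion (fun w =>
      (Finset.univ.filter (fun c : Letter k => List.IsChain R (c :: w))).image (fun c => c :: w))

lemma mem_words {n : ℕ} {w : List (Letter k)} :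
    w ∈ words k n ↔ w.length = n ∧ List.IsChain R w := by
  induction n generalizing w with
  | zero => simp [words]; rintro rfl; simp
  | succ n ih =>
    simp only [words, Finset.mem_biUnion, Finset.mem_image, Finset.mem_filter,
      Finset.mem_univ, true_and]
    constructor
    · rintro ⟨u, hu, c, hc, rfl⟩
      obtain ⟨hlen, _⟩ := ih.mp hu
      exact ⟨by simp [hlen], hc⟩
    · rintro ⟨hlen, hch⟩
      cases w with
      | nil => simp at hlen
      | cons c u =>
        exact ⟨u, ih.mpr ⟨by simpa using hlen, hch.tail⟩, c, hch, rfl⟩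

lemma words_disj {n : ℕ} : ∀ u ∈ words k n, ∀ u' ∈ words k n, u ≠ u' →
    Disjoint ((Finset.univ.filter (fun c : Letter k => List.IsChain R (c :: u))).image (fun c => c :: u))
      ((Finset.univ.filter (fun c : Letter k => List.IsChain R (c :: u'))).image (fun c => c :: u')) := by
  intro u _ u' _ hne
  simp only [Finset.disjoint_left, Finset.mem_image]
  rintro w ⟨c, _, rfl⟩ ⟨c', _, h⟩
  exact hne (by injection h with _ h2; exact h2.symm) 

lemma card_filter_ge (hk : 2 ≤ k) (u : List (Letter k)) (hu : List.IsChain R u) :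
    2 * k - 1 ≤ (Finset.univ.filter (fun c : Letter k => List.IsChain R (c :: u))).card := by
  cases u with
  | nil =>
    have : (Finset.univ.filter (fun c : Letter k => List.IsChain R (c :: ([] : List (Letter k))))) = Finset.univ := by
      apply Finset.filter_true_of_mem; intro c _; simp
    rw [this, Finset.card_univ]
    simp [Fintype.card_prod]
    omega
  | cons b t =>
    have hsub : Finset.univ.erase (linv b) ⊆
        Finset.univ.filter (fun c : Letter k => List.IsChain R (c :: b :: t)) := by
      intro c hc
      rw [Finset.mem_erase] at hc
      rw [Finset.mem_filter]
      refine ⟨Finset.mem_univ _, List.isChain_cons_cons.mpr ⟨?_, hu⟩⟩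
      unfold R
      intro hb
      exact hc.1 (eq_linv_comm.mpr hb)
    calc 2 * k - 1 = (Finset.univ.erase (linv b)).card := by
          rw [Finset.card_erase_of_mem (Finset.mem_univ _), Finset.card_univ]
          simp [Fintype.card_prod]
          omega
      _ ≤ _ := Finset.card_le_card hsub

lemma card_words_ge (hk : 2 ≤ k) (n : ℕ) : (2 * k - 1) ^ n ≤ (words k n).card := by
  induction n with
  | zero => simp [words]
  | succ n ih =>
    rw [words, Finset.card_biUnion (words_disj)]
    calc (2*k-1)^(n+1) = (2*k-1)^n * (2*k-1) := by ring
      _ ≤ (words k n).card * (2*k-1) := Nat.mul_le_mul_right _ ih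
      _ = ∑ _u ∈ words k n, (2*k-1) := by rw [Finset.sum_const, smul_eq_mul, Nat.mul_comm]
      _ ≤ ∑ u ∈ words k n, (Finset.univ.filter (fun c : Letter k => List.IsChain R (c :: u))).card :=
          Finset.sum_le_sum (fun u hu => card_filter_ge hk u (mem_words.mp hu).2)
      _ = _ := Finset.sum_congr rfl (fun u _ =>
          (Finset.card_image_of_injective _ (fun a b h => by injection h)).symm)

end KSS
namespace KSS

section Weighted

variable {k : ℕ}

/-- state weight -/
noncomputable def v (a : Letter k) (X Y : ℝ) (c : Letter k) : ℝ :=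
  if c = a then X else if c = linv a then Y else 1

/-- full one-step weighted sum -/
noncomputable def c0 (k : ℕ) (t X Y : ℝ) : ℝ := t * X + Y + (2 * (k:ℝ) - 2)

noncomputable def vo (a : Letter k) (t lam X Y : ℝ) : Option (Letter k) → ℝ
  | none => c0 k t X Y / lam
  | some c => v a X Y c

/-- weight of a word -/
noncomputable def wt (a : Letter k) (t lam X Y : ℝ) (w : List (Letter k)) : ℝ :=
  t ^ (w.count a) * vo a t lam X Y w.head?

/-- total weighted sum over reduced words of length n -/
noncomputable def S (a : Letter k) (t lam X Y : ℝ) (n : ℕ) : ℝ := ∑ w ∈ words k n, wt a t lam X Y w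

variable (a : Letter k) (t lam X Y : ℝ)

lemma a_ne_linv : a ≠ linv a := by
  intro h
  have := congrArg Prod.snd h
  simp [linv] at this

lemma v_self : v a X Y a = X := if_pos rfl

lemma v_linv : v a X Y (linv a) = Y := by
  rw [v, if_neg (Ne.symm (a_ne_linv a)), if_pos rfl]

lemma v_other {c : Letter k} (hc : c ≠ a) (hc' : c ≠ linv a) : v a X Y c = 1 := by
  rw [v, if_neg hc, if_neg hc']

lemma sum_univ_f (hk : 2 ≤ k) :
    ∑ c : Letter k, (t ^ (if c = a then 1 else 0) * v a X Y c) = c0 k t X Y := by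
  classical
  rw [← Finset.add_sum_erase _ _ (Finset.mem_univ a)]
  have hmem : linv a ∈ Finset.univ.erase a := by
    rw [Finset.mem_erase]
    exact ⟨fun h => a_ne_linv a h.symm, Finset.mem_univ _⟩
  rw [← Finset.add_sum_erase _ _ hmem]
  have h1 : ∀ c ∈ (Finset.univ.erase a).erase (linv a),
      t ^ (if c = a then 1 else 0) * v a X Y c = 1 := by
    intro c hc
    rw [Finset.mem_erase, Finset.mem_erase] at hc
    rw [v_other a X Y hc.2.1 hc.1, if_neg hc.2.1]
    simp
  rw [Finset.sum_congr rfl h1, Finset.sum_const, nsmul_eq_mul, mul_one]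
  have hcard : (((Finset.univ.erase a).erase (linv a)).card : ℝ) = 2 * (k:ℝ) - 2 := by
    rw [Finset.card_erase_of_mem hmem, Finset.card_erase_of_mem (Finset.mem_univ _),
      Finset.card_univ]
    have : Fintype.card (Letter k) = 2 * k := by simp [Fintype.card_prod]; ring
    rw [this]
    push_cast [Nat.cast_sub (by omega : 1 ≤ 2*k - 1), Nat.cast_sub (by omega : 1 ≤ 2*k)]
    ring
  rw [hcard, v_self, v_linv, if_pos rfl, if_neg (Ne.symm (a_ne_linv a))]
  rw [c0]
  ring

variable (hk : 2 ≤ k) (h1 : t * X + (2*(k:ℝ)-2) ≤ lam * X) (h2 : Y + (2*(k:ℝ)-2) ≤ lam * Y)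
  (h3 : t * X + Y + (2*(k:ℝ)-3) ≤ lam) (ht : 0 < t) (hlam : 0 < lam)
  (hX : 0 < X) (hY : 0 < Y)

include hk h1 h2 h3 ht hlam hX hY in
lemma inner_sum_le (w : List (Letter k)) (hw : List.IsChain R w) :
    ∑ c ∈ Finset.univ.filter (fun c : Letter k => List.IsChain R (c :: w)),
      (t ^ (if c = a then 1 else 0) * v a X Y c) ≤ lam * vo a t lam X Y w.head? := by
  classical
  cases w with
  | nil =>
    have hfil : Finset.univ.filter (fun c : Letter k => List.IsChain R (c :: ([]:List (Letter k)))) = Finset.univ := by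
      apply Finset.filter_true_of_mem; intro c _; simp
    rw [hfil, sum_univ_f a t X Y hk]
    simp only [List.head?_nil, vo]
    rw [mul_div_cancel₀ _ (ne_of_gt hlam)]
  | cons b u =>
    have hfil : Finset.univ.filter (fun c : Letter k => List.IsChain R (c :: b :: u))
        = Finset.univ.erase (linv b) := by
      ext c
      rw [Finset.mem_filter, Finset.mem_erase, List.isChain_cons_cons]
      constructor
      · rintro ⟨_, hR, _⟩
        exact ⟨fun h => hR (eq_linv_comm.mp h), Finset.mem_univ _⟩
      · rintro ⟨hne, _⟩
        exact ⟨Finset.mem_univ _, fun h => hne (eq_linv_comm.mp h), hw⟩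
    rw [hfil, Finset.sum_erase_eq_sub (Finset.mem_univ _), sum_univ_f a t X Y hk]
    simp only [List.head?_cons, vo]
    by_cases hb : b = a
    · subst hb
      have hne : linv b ≠ b := (a_ne_linv b).symm
      rw [v_linv, v_self, if_neg hne]
      simp only [pow_zero, one_mul, c0]
      linarith
    · by_cases hb' : b = linv a
      · have hlb : linv b = a := by rw [hb', linv_linv]
        rw [hlb, if_pos rfl, v_self]
        have : v a X Y b = Y := by rw [hb', v_linv]
        rw [this]
        simp only [pow_one, c0]
        linarith
      · have hlb1 : linv b ≠ a := fun h => hb' (by rw [← h, linv_linv])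
        have hlb2 : linv b ≠ linv a := fun h => hb (by
          have := congrArg linv h; rwa [linv_linv, linv_linv] at this)
        rw [v_other a X Y hlb1 hlb2, v_other a X Y hb hb', if_neg hlb1]
        simp only [pow_zero, one_mul, mul_one, c0]
        linarith

include hk h1 h2 h3 ht hlam hX hY in
lemma S_le (n : ℕ) : S a t lam X Y n ≤ lam ^ n * (c0 k t X Y / lam) := by
  classical
  induction n with
  | zero =>
    rw [S, words]
    simp [wt, vo]
  | succ n ih =>
    rw [S, words, Finset.sum_biUnion words_disj]
    have hstep : ∀ w ∈ words k n,
        (∑ x ∈ (Finset.univ.filter (fun c : Letter k => List.IsChain R (c :: w))).image (fun c => c :: w),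
          wt a t lam X Y x) ≤ lam * (t ^ (w.count a)) * vo a t lam X Y w.head? := by
      intro w hw
      rw [Finset.sum_image (by intro x _ y _ h; injection h)]
      have hrw : ∀ c : Letter k, wt a t lam X Y (c :: w)
          = (t ^ (if c = a then 1 else 0) * v a X Y c) * t ^ (w.count a) := by
        intro c
        rw [wt, List.count_cons]
        simp only [List.head?_cons, vo]
        by_cases hc : c = a
        · subst hc
          rw [if_pos rfl, if_pos (by simp), pow_add, pow_one]
          ring
        · rw [if_neg hc, if_neg (by simp [beq_iff_eq]; exact fun h => hc h)]
          rw [Nat.add_zero, pow_zero]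
          ring
      calc ∑ c ∈ Finset.univ.filter (fun c : Letter k => List.IsChain R (c :: w)), wt a t lam X Y (c :: w)
          = (∑ c ∈ Finset.univ.filter (fun c : Letter k => List.IsChain R (c :: w)),
              (t ^ (if c = a then 1 else 0) * v a X Y c)) * t ^ (w.count a) := by
            rw [Finset.sum_mul]
            exact Finset.sum_congr rfl (fun c _ => hrw c)
        _ ≤ (lam * vo a t lam X Y w.head?) * t ^ (w.count a) := by
            apply mul_le_mul_of_nonneg_right
              (inner_sum_le a t lam X Y hk h1 h2 h3 ht hlam hX hY w (mem_words.mp hw).2)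
              (pow_nonneg ht.le _)
        _ = lam * (t ^ (w.count a)) * vo a t lam X Y w.head? := by ring
    calc (∑ w ∈ words k n, ∑ x ∈ (Finset.univ.filter (fun c : Letter k => List.IsChain R (c :: w))).image (fun c => c :: w), wt a t lam X Y x)
        ≤ ∑ w ∈ words k n, lam * (t ^ (w.count a)) * vo a t lam X Y w.head? :=
          Finset.sum_le_sum hstep
      _ = lam * S a t lam X Y n := by
          rw [S, Finset.mul_sum]
          exact Finset.sum_congr rfl (fun w _ => by rw [wt]; ring)
      _ ≤ lam * (lam ^ n * (c0 k t X Y / lam)) := by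
          apply mul_le_mul_of_nonneg_left ih hlam.le
      _ = lam ^ (n+1) * (c0 k t X Y / lam) := by ring

end Weighted

end KSS
namespace KSS

section Counting

variable {k : ℕ} (a : Letter k) (t lam X Y : ℝ)

noncomputable def vmin (X Y : ℝ) : ℝ := min X (min Y 1)

lemma vmin_le_v (c : Letter k) : vmin X Y ≤ v a X Y c := by
  rw [v, vmin]
  by_cases hc : c = a
  · rw [if_pos hc]; exact min_le_left _ _
  · rw [if_neg hc]
    by_cases hc' : c = linv a
    · rw [if_pos hc']; exact le_trans (min_le_right _ _) (min_le_left _ _)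
    · rw [if_neg hc']; exact le_trans (min_le_right _ _) (min_le_right _ _)

variable (ht : 0 < t) (hlam : 0 < lam) (hX : 0 < X) (hY : 0 < Y) (hk : 2 ≤ k)

include ht hlam hX hY hk in
lemma wt_nonneg (w : List (Letter k)) : 0 ≤ wt a t lam X Y w := by
  rw [wt]
  apply mul_nonneg (pow_nonneg ht.le _)
  cases hw : w.head? with
  | none =>
    simp only [vo]
    apply div_nonneg _ hlam.le
    rw [c0]
    have : (2:ℝ) ≤ (k:ℝ) := by exact_mod_cast hk
    nlinarith
  | some c =>
    simp only [vo, v]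
    by_cases h : c = a
    · rw [if_pos h]; exact hX.le
    · rw [if_neg h]
      by_cases h' : c = linv a
      · rw [if_pos h']; exact hY.le
      · rw [if_neg h']; exact zero_le_one

include ht hlam hX hY hk in
lemma card_filter_le_S {n : ℕ} (hn : 1 ≤ n) (p : List (Letter k) → Prop) [DecidablePred p]
    (T0 : ℝ) (hT0 : 0 ≤ T0)
    (hp : ∀ w ∈ words k n, p w → T0 ≤ t ^ (w.count a)) :
    (((words k n).filter p).card : ℝ) * (T0 * vmin X Y) ≤ S a t lam X Y n := by
  classical
  have hvmin : 0 ≤ vmin X Y := le_min hX.le (le_min hY.le zero_le_one)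
  have hterm : ∀ w ∈ (words k n).filter p, T0 * vmin X Y ≤ wt a t lam X Y w := by
    intro w hw
    rw [Finset.mem_filter] at hw
    have hlen := (mem_words.mp hw.1).1
    cases w with
    | nil => simp at hlen; omega
    | cons c u =>
      rw [wt]
      simp only [List.head?_cons, vo]
      exact mul_le_mul (hp _ hw.1 hw.2) (vmin_le_v a X Y c) hvmin (pow_nonneg ht.le _)
  calc (((words k n).filter p).card : ℝ) * (T0 * vmin X Y)
      = ∑ _w ∈ (words k n).filter p, T0 * vmin X Y := by
        rw [Finset.sum_const, nsmul_eq_mul]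
    _ ≤ ∑ w ∈ (words k n).filter p, wt a t lam X Y w := Finset.sum_le_sum hterm
    _ ≤ S a t lam X Y n := by
        rw [S]
        exact Finset.sum_le_sum_of_subset_of_nonneg (Finset.filter_subset _ _)
          (fun w hw _ => wt_nonneg a t lam X Y ht hlam hX hY hk w)

end Counting

section CWords

variable {k : ℕ}

/-- cyclically reduced words of length n, as a Finset -/
noncomputable def cwords (k : ℕ) (n : ℕ) : Finset (List (Letter k)) :=
  (words k n).filter (fun w => List.IsChain R (w ++ w))

lemma exists_avoid (hk : 2 ≤ k) (x y : Letter k) : ∃ z : Letter k, z ≠ x ∧ z ≠ y := by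
  by_contra h
  push_neg at h
  have hsub : (Finset.univ : Finset (Letter k)) ⊆ {x, y} := by
    intro z _
    rcases Classical.em (z = x) with hz | hz
    · simp [hz]
    · simp [h z hz]
  have hcard := Finset.card_le_card hsub
  rw [Finset.card_univ] at hcard
  have h1 : Fintype.card (Letter k) = 2 * k := by simp [Fintype.card_prod]; ring
  have h2 : ({x, y} : Finset (Letter k)).card ≤ 2 := Finset.card_insert_le _ _ |>.trans (by simp)
  omega

noncomputable def pick (hk : 2 ≤ k) (x y : Letter k) : Letter k := (exists_avoid hk x y).choose

lemma pick_ne1 (hk : 2 ≤ k) (x y : Letter k) : pick hk x y ≠ x := (exists_avoid hk x y).choose_spec.1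
lemma pick_ne2 (hk : 2 ≤ k) (x y : Letter k) : pick hk x y ≠ y := (exists_avoid hk x y).choose_spec.2

/-- extend a reduced word to a cyclically reduced word, two letters longer -/
noncomputable def extW (hk : 2 ≤ k) (u : List (Letter k)) : List (Letter k) :=
  let d0 : Letter k := (⟨0, by omega⟩, true)
  let s := pick hk (linv (u.getLastD d0)) (linv (u.getLastD d0))
  let p := pick hk (linv (u.headD d0)) (linv s)
  p :: u ++ [s]

lemma extW_spec (hk : 2 ≤ k) (u : List (Letter k)) (hu : List.IsChain R u) :
    List.IsChain R (extW hk u ++ extW hk u) ∧ (extW hk u).length = u.length + 2 := by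
  set d0 : Letter k := (⟨0, by omega⟩, true) with hd0
  set s := pick hk (linv (u.getLastD d0)) (linv (u.getLastD d0)) with hs
  set p := pick hk (linv (u.headD d0)) (linv s) with hp
  have hw : extW hk u = p :: u ++ [s] := rfl
  have hps : p ≠ linv s := pick_ne2 hk _ _
  have hchain : List.IsChain R (p :: u ++ [s]) := by
    rw [List.cons_append]
    rw [List.isChain_cons]
    constructor
    · intro y hy
      cases u with
      | nil =>
        simp at hy
        subst hy
        exact fun hc => hps (eq_linv_comm.mp hc)
      | cons h tl =>
        simp at hy
        subst hy
        have : p ≠ linv h := pick_ne1 hk _ _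
        exact fun hc => this (eq_linv_comm.mp hc)
    · rw [List.isChain_append]
      refine ⟨hu, List.isChain_singleton s, ?_⟩
      intro x hx y hy
      simp at hy
      subst hy
      have hx' : u.getLastD d0 = x := by
        rw [List.getLastD_eq_getLast?, hx]
        rfl
      rw [← hx']
      exact Ne.symm (fun hc => (pick_ne1 hk (linv (u.getLastD d0)) (linv (u.getLastD d0))) hc.symm)
  constructor
  · rw [hw, List.isChain_append]
    refine ⟨hchain, hchain, ?_⟩
    intro x hx y hy
    have e : p :: u ++ [s] = (p :: u) ++ [s] := by simp
    rw [e, List.getLast?_concat] at hx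
    simp at hx hy
    subst hx; subst hy
    exact hps
  · rw [hw]; simp

lemma card_cwords_ge (hk : 2 ≤ k) (n : ℕ) :
    (2 * k - 1) ^ n ≤ (cwords k (n + 2)).card := by
  refine le_trans (card_words_ge hk n) ?_
  apply Finset.card_le_card_of_injOn (extW hk)
  · intro u hu
    obtain ⟨hlen, hch⟩ := mem_words.mp hu
    obtain ⟨hcyc, hl⟩ := extW_spec hk u hch
    rw [cwords, Finset.mem_coe, Finset.mem_filter]
    refine ⟨mem_words.mpr ⟨by rw [hl, hlen], ?_⟩, hcyc⟩
    exact (List.isChain_append.mp hcyc).1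
  · intro u hu u' hu' heq
    have hlen : u.length = u'.length := by
      rw [(mem_words.mp hu).1, (mem_words.mp hu').1]
    rw [extW, extW] at heq
    simp only [List.cons_append] at heq
    injection heq with h1 h2
    exact (List.append_inj h2 hlen).1

end CWords

section Bridge

variable {k : ℕ}

lemma ncard_eq_card (n : ℕ) (P : List (Letter k) → Prop) [DecidablePred P] :
    {g : FG k | IsCyclicallyReduced g ∧ wordLength g = n ∧ P (FreeGroup.toWord g)}.ncard
    = ((cwords k n).filter (fun w => P w)).card := by
  classical
  set Sg := {g : FG k | IsCyclicallyReduced g ∧ wordLength g = n ∧ P (FreeGroup.toWord g)}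
  have himg : FreeGroup.toWord '' Sg = ↑((cwords k n).filter (fun w => P w)) := by
    ext w
    simp only [Set.mem_image, Finset.coe_filter, Set.mem_setOf_eq, Finset.mem_coe,
      cwords, Finset.mem_filter]
    constructor
    · rintro ⟨g, ⟨hcyc, hlen, hP⟩, rfl⟩
      refine ⟨⟨mem_words.mpr ⟨hlen, ?_⟩, ?_⟩, hP⟩
      · exact (reduce_eq_self_iff _).mp (FreeGroup.reduce_toWord g)
      · exact (reduce_eq_self_iff _).mp hcyc
    · rintro ⟨⟨hw, hcyc⟩, hP⟩
      obtain ⟨hlen, hch⟩ := mem_words.mp hw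
      refine ⟨FreeGroup.mk w, ?_, ?_⟩
      · have htw : FreeGroup.toWord (FreeGroup.mk w) = w := by
          rw [FreeGroup.toWord_mk, (reduce_eq_self_iff w).mpr hch]
        refine ⟨?_, ?_, ?_⟩
        · rw [IsCyclicallyReduced, CyclicallyReducedWord, htw]
          exact (reduce_eq_self_iff _).mpr hcyc
        · rw [wordLength, htw, hlen]
        · rw [htw]; exact hP
      · rw [FreeGroup.toWord_mk, (reduce_eq_self_iff w).mpr hch]
  calc Sg.ncard = (FreeGroup.toWord '' Sg).ncard :=
        (Set.ncard_image_of_injective Sg FreeGroup.toWord_injective).symm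
    _ = _ := by rw [himg, Set.ncard_coe_finset]

lemma gammaC_eq (n : ℕ) : gammaC (Cset k) n = (cwords k n).card := by
  classical
  rw [gammaC]
  have hset : {g ∈ Cset k | wordLength g = n}
      = {g : FG k | IsCyclicallyReduced g ∧ wordLength g = n ∧ (fun _ : List (Letter k) => True) (FreeGroup.toWord g)} := by
    ext g; simp [Cset]
  rw [hset, ncard_eq_card n (fun _ : List (Letter k) => True)]
  congr 1
  exact Finset.filter_true_of_mem (fun _ _ => trivial)

end Bridge

end KSS
namespace KSS

section Analysis

lemma log_ge_aux {d : ℝ} (hd : 0 < d) (hd1 : d < 1) : -(d / (1 - d)) ≤ Real.log (1 - d) := by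
  have h1d : 0 < 1 - d := by linarith
  have h := Real.log_le_sub_one_of_pos (x := 1 / (1 - d)) (by positivity)
  rw [Real.log_div one_ne_zero (ne_of_gt h1d), Real.log_one] at h
  have heq : 1 / (1 - d) - 1 = d / (1 - d) := by field_simp; ring
  rw [heq] at h
  linarith

lemma log_ge_aux' {d : ℝ} (hd : 0 < d) : d / (1 + d) ≤ Real.log (1 + d) := by
  have h1d : 0 < 1 + d := by linarith
  have h := Real.log_le_sub_one_of_pos (x := 1 / (1 + d)) (by positivity)
  rw [Real.log_div one_ne_zero (ne_of_gt h1d), Real.log_one] at h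
  have heq : 1 / (1 + d) - 1 = -(d / (1 + d)) := by field_simp; ring
  rw [heq] at h
  linarith

lemma exists_upper (k : ℕ) (hk : 2 ≤ k) (hi : ℝ) (hhi1 : 1 / (2*(k:ℝ)) < hi) (hhi2 : hi < 1) :
    ∃ t lam : ℝ, 1 < t ∧ t < lam ∧ 1 < lam ∧
      t * (2*(k:ℝ)-2) / (lam - t) + (2*(k:ℝ)-2) / (lam - 1) + (2*(k:ℝ)-3) ≤ lam ∧
      lam < (2*(k:ℝ)-1) * t ^ hi := by
  obtain ⟨c, hc⟩ : ∃ x : ℝ, x = (k:ℝ) := ⟨_, rfl⟩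
  have hc2 : (2:ℝ) ≤ c := by rw [hc]; exact_mod_cast hk
  rw [← hc] at hhi1 ⊢
  obtain ⟨b, hb⟩ : ∃ x : ℝ, x = (1/(2*c) + hi)/2 := ⟨_, rfl⟩
  have hcpos : 0 < c := by linarith
  have hbgt : 1/(2*c) < b := by rw [hb]; linarith
  have hblt : b < hi := by rw [hb]; linarith
  have hbpos : 0 < b := lt_trans (by positivity) hbgt
  have hb1 : b < 1 := lt_trans hblt hhi2
  have h2cb : 1 < 2*c*b := by
    calc (1:ℝ) = 1/(2*c) * (2*c) := by field_simp
      _ < b * (2*c) := mul_lt_mul_of_pos_right hbgt (by positivity)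
      _ = 2*c*b := by ring
  obtain ⟨A0, hA0def⟩ : ∃ x : ℝ, x = -2 + 6*c + 4*c*b - 4*c^2 - 12*c^2*b + 8*c^3*b := ⟨_, rfl⟩
  obtain ⟨A1, hA1def⟩ : ∃ x : ℝ, x = -2*b - 2*b^2 + 8*c*b + 12*c*b^2 - 8*c^2*b - 24*c^2*b^2 + 16*c^3*b^2 := ⟨_, rfl⟩
  obtain ⟨A2, hA2def⟩ : ∃ x : ℝ, x = -b^2 - b^3 + 4*c*b^2 + 6*c*b^3 - 4*c^2*b^2 - 12*c^2*b^3 + 8*c^3*b^3 := ⟨_, rfl⟩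
  have hA0 : (0:ℝ) < A0 := by
    have hfac : A0 = (2*c-1)*((2*c-2)*(2*c*b-1)) := by rw [hA0def]; ring
    rw [hfac]
    exact mul_pos (by linarith) (mul_pos (by linarith) (by linarith))
  obtain ⟨M, hM⟩ : ∃ x : ℝ, x = |A1| + |A2| + 1 := ⟨_, rfl⟩
  have hMpos : 0 < M := by rw [hM]; positivity
  obtain ⟨d, hd⟩ : ∃ x : ℝ, x = min (min 1 ((hi/b - 1)/2)) (A0 / M) := ⟨_, rfl⟩
  have hhib : 1 < hi/b := (one_lt_div hbpos).mpr hblt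
  have hdpos : 0 < d := by rw [hd]; exact lt_min (lt_min one_pos (by linarith)) (by positivity)
  have hd1 : d ≤ 1 := by rw [hd]; exact le_trans (min_le_left _ _) (min_le_left _ _)
  have hdhi : d ≤ (hi/b - 1)/2 := by rw [hd]; exact le_trans (min_le_left _ _) (min_le_right _ _)
  have hdM : d ≤ A0 / M := by rw [hd]; exact min_le_right _ _
  have hr : 0 ≤ A0 + A1*d + A2*d^2 := by
    have hd2 : d^2 ≤ d := by
      have h := mul_le_mul_of_nonneg_right hd1 hdpos.le
      have e : d^2 = d*d := by ring
      linarith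
    have p1 : 0 ≤ (A1+|A1|)*d := mul_nonneg (by linarith [neg_abs_le A1]) hdpos.le
    have e1 : (A1+|A1|)*d = A1*d + |A1| *d := by ring
    have p2 : 0 ≤ (A2+|A2|)*d^2 := mul_nonneg (by linarith [neg_abs_le A2]) (sq_nonneg d)
    have e2 : (A2+|A2|)*d^2 = A2*d^2 + |A2| *d^2 := by ring
    have p3 : |A2| *d^2 ≤ |A2| *d := mul_le_mul_of_nonneg_left hd2 (abs_nonneg A2)
    have hMd : M * d ≤ A0 := by
      have hcan : M * (A0/M) = A0 := by field_simp
      calc M * d ≤ M * (A0/M) := mul_le_mul_of_nonneg_left hdM hMpos.le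
        _ = A0 := hcan
    have hMexp : M * d = |A1| * d + |A2| * d + d := by rw [hM]; ring
    linarith
  have hbd : 0 ≤ b*d := mul_nonneg hbpos.le hdpos.le
  have h2c1b : 0 ≤ (2*c-1)*(b*d) := mul_nonneg (by linarith) hbd
  have elam : (2*c-1)*(1+b*d) = (2*c-1) + (2*c-1)*(b*d) := by ring
  refine ⟨1 + d, (2*c - 1)*(1 + b*d), by linarith, by linarith, by linarith, ?_, ?_⟩
  · have hlt : 0 < (2*c-1)*(1+b*d) - (1+d) := by linarith
    have hl1 : 0 < (2*c-1)*(1+b*d) - 1 := by linarith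
    have hpoly : 0 ≤ ((2*c-1)*(1+b*d) - (2*c-3)) * (((2*c-1)*(1+b*d) - (1+d)) * ((2*c-1)*(1+b*d) - 1))
        - (((1+d)*(2*c-2)) * ((2*c-1)*(1+b*d) - 1) + (2*c-2) * ((2*c-1)*(1+b*d) - (1+d))) := by
      have expand : ((2*c-1)*(1+b*d) - (2*c-3)) * (((2*c-1)*(1+b*d) - (1+d)) * ((2*c-1)*(1+b*d) - 1))
          - (((1+d)*(2*c-2)) * ((2*c-1)*(1+b*d) - 1) + (2*c-2) * ((2*c-1)*(1+b*d) - (1+d)))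
          = d * (A0 + A1*d + A2*d^2) := by
        rw [hA0def, hA1def, hA2def]; ring
      rw [expand]
      exact mul_nonneg hdpos.le hr
    have step : ((1+d) * (2*c-2))/((2*c-1)*(1+b*d) - (1+d)) + (2*c-2)/((2*c-1)*(1+b*d) - 1)
        ≤ (2*c-1)*(1+b*d) - (2*c-3) := by
      rw [div_add_div _ _ (ne_of_gt hlt) (ne_of_gt hl1), div_le_iff₀ (mul_pos hlt hl1)]
      linarith [hpoly]
    linarith
  · have h1d : (0:ℝ) < 1 + d := by linarith
    have hrpow : (1+d) ^ hi = Real.exp (hi * Real.log (1+d)) := by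
      rw [Real.rpow_def_of_pos h1d, mul_comm]
    have hlog := log_ge_aux' hdpos
    have hexp : 1 + hi * Real.log (1+d) ≤ Real.exp (hi * Real.log (1+d)) := by
      have := Real.add_one_le_exp (hi * Real.log (1+d))
      linarith
    have hhipos : (0:ℝ) < hi := lt_trans (by positivity) hhi1
    have hmono : hi * (d/(1+d)) ≤ hi * Real.log (1+d) :=
      mul_le_mul_of_nonneg_left hlog hhipos.le
    have hb1d : (1+d)*b < hi := by
      have h' : 1 + d < hi/b := by linarith
      exact (lt_div_iff₀ hbpos).mp h'
    have hkey : b*d < hi * (d/(1+d)) := by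
      rw [mul_div_assoc', lt_div_iff₀ h1d]
      have h'' := mul_lt_mul_of_pos_right hb1d hdpos
      have e : (1+d)*b*d = b*d*(1+d) := by ring
      linarith
    have hfin : 1 + b*d < (1+d) ^ hi := by rw [hrpow]; linarith
    have h2c1 : (0:ℝ) < 2*c - 1 := by linarith
    calc (2*c-1)*(1+b*d) < (2*c-1)*((1+d)^hi) := mul_lt_mul_of_pos_left hfin h2c1
      _ = (2*c-1)*(1+d)^hi := by ring

lemma exists_lower (k : ℕ) (hk : 2 ≤ k) (lo : ℝ) (hlo1 : 0 < lo) (hlo2 : lo < 1 / (2*(k:ℝ))) :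
    ∃ t lam : ℝ, 0 < t ∧ t < 1 ∧ t < lam ∧ 1 < lam ∧
      t * (2*(k:ℝ)-2) / (lam - t) + (2*(k:ℝ)-2) / (lam - 1) + (2*(k:ℝ)-3) ≤ lam ∧
      lam < (2*(k:ℝ)-1) * t ^ lo := by
  obtain ⟨c, hc⟩ : ∃ x : ℝ, x = (k:ℝ) := ⟨_, rfl⟩
  have hc2 : (2:ℝ) ≤ c := by rw [hc]; exact_mod_cast hk
  rw [← hc] at hlo2 ⊢
  obtain ⟨b, hb⟩ : ∃ x : ℝ, x = (lo + 1/(2*c))/2 := ⟨_, rfl⟩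
  have hcpos : 0 < c := by linarith
  have hbgt : lo < b := by rw [hb]; linarith
  have hblt : b < 1/(2*c) := by rw [hb]; linarith
  have hbpos : 0 < b := lt_trans hlo1 hbgt
  have hb1 : b < 1 := by
    have h14 : 1/(2*c) ≤ 1/4 := by
      rw [div_le_div_iff₀ (by positivity) (by norm_num)]
      linarith
    linarith
  have h2cb : 2*c*b < 1 := by
    calc 2*c*b = b*(2*c) := by ring
      _ < (1/(2*c))*(2*c) := mul_lt_mul_of_pos_right hblt (by positivity)
      _ = 1 := by field_simp
  obtain ⟨A0, hA0def⟩ : ∃ x : ℝ, x = 2 - 6*c - 4*c*b + 4*c^2 + 12*c^2*b - 8*c^3*b := ⟨_, rfl⟩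
  obtain ⟨A1, hA1def⟩ : ∃ x : ℝ, x = -2*b - 2*b^2 + 8*c*b + 12*c*b^2 - 8*c^2*b - 24*c^2*b^2 + 16*c^3*b^2 := ⟨_, rfl⟩
  obtain ⟨A2, hA2def⟩ : ∃ x : ℝ, x = b^2 + b^3 - 4*c*b^2 - 6*c*b^3 + 4*c^2*b^2 + 12*c^2*b^3 - 8*c^3*b^3 := ⟨_, rfl⟩
  have hA0 : (0:ℝ) < A0 := by
    have hfac : A0 = (2*c-1)*((2*c-2)*(1-2*c*b)) := by rw [hA0def]; ring
    rw [hfac]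
    exact mul_pos (by linarith) (mul_pos (by linarith) (by linarith))
  obtain ⟨M, hM⟩ : ∃ x : ℝ, x = |A1| + |A2| + 1 := ⟨_, rfl⟩
  have hMpos : 0 < M := by rw [hM]; positivity
  obtain ⟨d, hd⟩ : ∃ x : ℝ, x = min (min (1/2) ((1 - lo/b)/2)) (A0 / M) := ⟨_, rfl⟩
  have hlob : lo/b < 1 := (div_lt_one hbpos).mpr hbgt
  have hdpos : 0 < d := by rw [hd]; exact lt_min (lt_min (by norm_num) (by linarith)) (by positivity)
  have hd1 : d ≤ 1/2 := by rw [hd]; exact le_trans (min_le_left _ _) (min_le_left _ _)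
  have hdlo : d ≤ (1 - lo/b)/2 := by rw [hd]; exact le_trans (min_le_left _ _) (min_le_right _ _)
  have hdM : d ≤ A0 / M := by rw [hd]; exact min_le_right _ _
  have hr : 0 ≤ A0 + A1*d + A2*d^2 := by
    have hd2 : d^2 ≤ d := by
      have h := mul_le_mul_of_nonneg_right (by linarith : d ≤ 1) hdpos.le
      have e : d^2 = d*d := by ring
      linarith
    have p1 : 0 ≤ (A1+|A1|)*d := mul_nonneg (by linarith [neg_abs_le A1]) hdpos.le
    have e1 : (A1+|A1|)*d = A1*d + |A1| *d := by ring
    have p2 : 0 ≤ (A2+|A2|)*d^2 := mul_nonneg (by linarith [neg_abs_le A2]) (sq_nonneg d)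
    have e2 : (A2+|A2|)*d^2 = A2*d^2 + |A2| *d^2 := by ring
    have p3 : |A2| *d^2 ≤ |A2| *d := mul_le_mul_of_nonneg_left hd2 (abs_nonneg A2)
    have hMd : M * d ≤ A0 := by
      have hcan : M * (A0/M) = A0 := by field_simp
      calc M * d ≤ M * (A0/M) := mul_le_mul_of_nonneg_left hdM hMpos.le
        _ = A0 := hcan
    have hMexp : M * d = |A1| * d + |A2| * d + d := by rw [hM]; ring
    linarith
  have hblo : lo < b*(1-d) := by
    have h3 : lo/b ≤ 1-2*d := by linarith
    have h2' : lo ≤ (1-2*d)*b := by rwa [div_le_iff₀ hbpos] at h3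
    have e : b*(1-d) - (1-2*d)*b = b*d := by ring
    linarith [mul_pos hbpos hdpos]
  have hbdle : b*d ≤ d := by
    have p : 0 ≤ (1-b)*d := mul_nonneg (by linarith) hdpos.le
    have e : (1-b)*d = d - b*d := by ring
    linarith
  have hbd : 0 ≤ b*d := mul_nonneg hbpos.le hdpos.le
  have hlamge : (2*c-1)*(1-d) ≤ (2*c-1)*(1-b*d) :=
    mul_le_mul_of_nonneg_left (by linarith) (by linarith)
  have hlamge3 : 3*(1-d) ≤ (2*c-1)*(1-d) :=
    mul_le_mul_of_nonneg_right (by linarith) (by linarith)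
  refine ⟨1 - d, (2*c - 1)*(1 - b*d), by linarith, by linarith, by linarith, by linarith, ?_, ?_⟩
  · have hlt : 0 < (2*c-1)*(1-b*d) - (1-d) := by linarith
    have hl1 : 0 < (2*c-1)*(1-b*d) - 1 := by linarith
    have hpoly : 0 ≤ ((2*c-1)*(1-b*d) - (2*c-3)) * (((2*c-1)*(1-b*d) - (1-d)) * ((2*c-1)*(1-b*d) - 1))
        - (((1-d)*(2*c-2)) * ((2*c-1)*(1-b*d) - 1) + (2*c-2) * ((2*c-1)*(1-b*d) - (1-d))) := by
      have expand : ((2*c-1)*(1-b*d) - (2*c-3)) * (((2*c-1)*(1-b*d) - (1-d)) * ((2*c-1)*(1-b*d) - 1))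
          - (((1-d)*(2*c-2)) * ((2*c-1)*(1-b*d) - 1) + (2*c-2) * ((2*c-1)*(1-b*d) - (1-d)))
          = d * (A0 + A1*d + A2*d^2) := by
        rw [hA0def, hA1def, hA2def]; ring
      rw [expand]
      exact mul_nonneg hdpos.le hr
    have step : ((1-d) * (2*c-2))/((2*c-1)*(1-b*d) - (1-d)) + (2*c-2)/((2*c-1)*(1-b*d) - 1)
        ≤ (2*c-1)*(1-b*d) - (2*c-3) := by
      rw [div_add_div _ _ (ne_of_gt hlt) (ne_of_gt hl1), div_le_iff₀ (mul_pos hlt hl1)]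
      linarith [hpoly]
    linarith
  · have h1d : (0:ℝ) < 1 - d := by linarith
    have hrpow : (1-d) ^ lo = Real.exp (lo * Real.log (1-d)) := by
      rw [Real.rpow_def_of_pos h1d, mul_comm]
    have hlog := log_ge_aux hdpos (by linarith : d < 1)
    have hexp : 1 + lo * Real.log (1-d) ≤ Real.exp (lo * Real.log (1-d)) := by
      have := Real.add_one_le_exp (lo * Real.log (1-d))
      linarith
    have hmono : lo * (-(d/(1-d))) ≤ lo * Real.log (1-d) :=
      mul_le_mul_of_nonneg_left hlog hlo1.le
    have he : lo * (-(d/(1-d))) = -(lo * (d/(1-d))) := by ring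
    have hkey : lo * (d/(1-d)) < b*d := by
      rw [mul_div_assoc', div_lt_iff₀ h1d]
      have h'' := mul_lt_mul_of_pos_right hblo hdpos
      have e : b*(1-d)*d = b*d*(1-d) := by ring
      linarith
    have hfin : 1 - b*d < (1-d) ^ lo := by rw [hrpow]; linarith
    have h2c1 : (0:ℝ) < 2*c - 1 := by linarith
    calc (2*c-1)*(1-b*d) < (2*c-1)*((1-d)^lo) := mul_lt_mul_of_pos_left hfin h2c1
      _ = (2*c-1)*(1-d)^lo := by ring

end Analysis

end KSS

set_option maxHeartbeats 1000000 in
/-- for any `ε > 0` and `a ∈ Σ`, the proportion `T(n,a,ε)/γ(n,C)` of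
cyclically reduced words of length `n` with `w_a/n ∈ (1/(2k) − ε/2, 1/(2k) + ε/2)`
tends to `1` exponentially fast. -/
theorem cyclic_letter_frequency_generic (k : ℕ) (hk : 2 ≤ k) (ε : ℝ) (hε : 0 < ε)
    (a : Letter k) :
    ∃ K : ℝ, 0 < K ∧ ∃ σ : ℝ, 0 < σ ∧ σ < 1 ∧ ∀ n : ℕ,
      |1 - ({g : FG k | IsCyclicallyReduced g ∧ wordLength g = n ∧
          1 / (2 * (k : ℝ)) - ε / 2 < ((FreeGroup.toWord g).count a : ℝ) / n ∧
          ((FreeGroup.toWord g).count a : ℝ) / n < 1 / (2 * (k : ℝ)) + ε / 2}.ncard : ℝ) /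
        (gammaC (Cset k) n : ℝ)| ≤ K * σ ^ n := by
  classical
  have hkR : (2:ℝ) ≤ (k:ℝ) := by exact_mod_cast hk
  have hkpos : (0:ℝ) < (k:ℝ) := by linarith
  -- clipped epsilon and thresholds
  obtain ⟨ε', hε'def⟩ : ∃ x:ℝ, x = min ε (1/(2*(k:ℝ))) := ⟨_, rfl⟩
  have hε'pos : 0 < ε' := by rw [hε'def]; exact lt_min hε (by positivity)
  have hε'le : ε' ≤ ε := by rw [hε'def]; exact min_le_left _ _
  have hε'k : ε' ≤ 1/(2*(k:ℝ)) := by rw [hε'def]; exact min_le_right _ _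
  obtain ⟨lo, hlodef⟩ : ∃ x:ℝ, x = 1/(2*(k:ℝ)) - ε'/2 := ⟨_, rfl⟩
  obtain ⟨hi, hhidef⟩ : ∃ x:ℝ, x = 1/(2*(k:ℝ)) + ε'/2 := ⟨_, rfl⟩
  have h2kinv : (0:ℝ) < 1/(2*(k:ℝ)) := by positivity
  have hlo1 : 0 < lo := by rw [hlodef]; linarith
  have hlo2 : lo < 1/(2*(k:ℝ)) := by rw [hlodef]; linarith
  have hhi1 : 1/(2*(k:ℝ)) < hi := by rw [hhidef]; linarith
  have hhi2 : hi < 1 := by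
    have hk14 : 1/(2*(k:ℝ)) ≤ 1/4 := by
      rw [div_le_div_iff₀ (by positivity) (by norm_num)]; linarith
    rw [hhidef]; linarith
  -- the two Chernoff parameter pairs
  obtain ⟨tu, lu, htu1, htulu, hlu1, h3u, hltu⟩ := KSS.exists_upper k hk hi hhi1 hhi2
  obtain ⟨tl, ll, htl0, htl1, htlll, hll1, h3l, hltl⟩ := KSS.exists_lower k hk lo hlo1 hlo2
  have htupos : (0:ℝ) < tu := lt_trans one_pos htu1
  have hlupos : (0:ℝ) < lu := lt_trans one_pos hlu1
  have hllpos : (0:ℝ) < ll := lt_trans one_pos hll1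
  -- weights for upper tail
  obtain ⟨Xu, hXudef⟩ : ∃ x:ℝ, x = (2*(k:ℝ)-2)/(lu - tu) := ⟨_, rfl⟩
  obtain ⟨Yu, hYudef⟩ : ∃ x:ℝ, x = (2*(k:ℝ)-2)/(lu - 1) := ⟨_, rfl⟩
  have hXupos : 0 < Xu := by rw [hXudef]; exact div_pos (by linarith) (by linarith)
  have hYupos : 0 < Yu := by rw [hYudef]; exact div_pos (by linarith) (by linarith)
  have h1u : tu * Xu + (2*(k:ℝ)-2) ≤ lu * Xu := by
    have e : (lu - tu)*Xu = 2*(k:ℝ)-2 := by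
      rw [hXudef, mul_div_cancel₀ _ (by linarith : lu - tu ≠ 0)]
    have e2 : lu*Xu - tu*Xu = (lu-tu)*Xu := by ring
    linarith
  have h2u : Yu + (2*(k:ℝ)-2) ≤ lu * Yu := by
    have e : (lu - 1)*Yu = 2*(k:ℝ)-2 := by
      rw [hYudef, mul_div_cancel₀ _ (by linarith : lu - 1 ≠ 0)]
    have e2 : lu*Yu - 1*Yu = (lu-1)*Yu := by ring
    linarith
  have h3u' : tu * Xu + Yu + (2*(k:ℝ)-3) ≤ lu := by
    have e3 : tu * Xu = tu*(2*(k:ℝ)-2)/(lu-tu) := by rw [hXudef, mul_div_assoc]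
    rw [e3, hYudef]
    exact h3u
  -- weights for lower tail
  obtain ⟨Xl, hXldef⟩ : ∃ x:ℝ, x = (2*(k:ℝ)-2)/(ll - tl) := ⟨_, rfl⟩
  obtain ⟨Yl, hYldef⟩ : ∃ x:ℝ, x = (2*(k:ℝ)-2)/(ll - 1) := ⟨_, rfl⟩
  have hXlpos : 0 < Xl := by rw [hXldef]; exact div_pos (by linarith) (by linarith)
  have hYlpos : 0 < Yl := by rw [hYldef]; exact div_pos (by linarith) (by linarith)
  have h1l : tl * Xl + (2*(k:ℝ)-2) ≤ ll * Xl := by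
    have e : (ll - tl)*Xl = 2*(k:ℝ)-2 := by
      rw [hXldef, mul_div_cancel₀ _ (by linarith : ll - tl ≠ 0)]
    have e2 : ll*Xl - tl*Xl = (ll-tl)*Xl := by ring
    linarith
  have h2l : Yl + (2*(k:ℝ)-2) ≤ ll * Yl := by
    have e : (ll - 1)*Yl = 2*(k:ℝ)-2 := by
      rw [hYldef, mul_div_cancel₀ _ (by linarith : ll - 1 ≠ 0)]
    have e2 : ll*Yl - 1*Yl = (ll-1)*Yl := by ring
    linarith
  have h3l' : tl * Xl + Yl + (2*(k:ℝ)-3) ≤ ll := by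
    have e3 : tl * Xl = tl*(2*(k:ℝ)-2)/(ll-tl) := by rw [hXldef, mul_div_assoc]
    rw [e3, hYldef]
    exact h3l
  -- constants
  have hc0u : 0 < KSS.c0 k tu Xu Yu := by
    rw [KSS.c0]; have h := mul_pos htupos hXupos; linarith
  have hc0l : 0 < KSS.c0 k tl Xl Yl := by
    rw [KSS.c0]; have h := mul_pos htl0 hXlpos; linarith
  have hvminu : 0 < KSS.vmin Xu Yu := lt_min hXupos (lt_min hYupos one_pos)
  have hvminl : 0 < KSS.vmin Xl Yl := lt_min hXlpos (lt_min hYlpos one_pos)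
  obtain ⟨Cu, hCudef⟩ : ∃ x:ℝ, x = (KSS.c0 k tu Xu Yu / lu) / KSS.vmin Xu Yu := ⟨_, rfl⟩
  obtain ⟨Cl, hCldef⟩ : ∃ x:ℝ, x = (KSS.c0 k tl Xl Yl / ll) / KSS.vmin Xl Yl := ⟨_, rfl⟩
  have hCupos : 0 < Cu := by rw [hCudef]; positivity
  have hClpos : 0 < Cl := by rw [hCldef]; positivity
  have htuhipos : (0:ℝ) < tu ^ hi := Real.rpow_pos_of_pos htupos hi
  have htllopos : (0:ℝ) < tl ^ lo := Real.rpow_pos_of_pos htl0 lo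
  obtain ⟨mu1, hmu1def⟩ : ∃ x:ℝ, x = lu / tu ^ hi := ⟨_, rfl⟩
  obtain ⟨mu2, hmu2def⟩ : ∃ x:ℝ, x = ll / tl ^ lo := ⟨_, rfl⟩
  have hmu1pos : 0 < mu1 := by rw [hmu1def]; positivity
  have hmu2pos : 0 < mu2 := by rw [hmu2def]; positivity
  have hmu1lt : mu1 < 2*(k:ℝ)-1 := by
    rw [hmu1def, div_lt_iff₀ htuhipos]
    linarith
  have hmu2lt : mu2 < 2*(k:ℝ)-1 := by
    rw [hmu2def, div_lt_iff₀ htllopos]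
    linarith
  obtain ⟨mumax, hmumaxdef⟩ : ∃ x:ℝ, x = max mu1 mu2 := ⟨_, rfl⟩
  have hmumaxpos : 0 < mumax := by rw [hmumaxdef]; exact lt_max_of_lt_left hmu1pos
  have hmumaxlt : mumax < 2*(k:ℝ)-1 := by rw [hmumaxdef]; exact max_lt hmu1lt hmu2lt
  have hmu1le : mu1 ≤ mumax := by rw [hmumaxdef]; exact le_max_left _ _
  have hmu2le : mu2 ≤ mumax := by rw [hmumaxdef]; exact le_max_right _ _
  obtain ⟨sig, hsigdef⟩ : ∃ x:ℝ, x = mumax / (2*(k:ℝ)-1) := ⟨_, rfl⟩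
  have hsigpos : 0 < sig := by rw [hsigdef]; exact div_pos hmumaxpos (by linarith)
  have hsiglt1 : sig < 1 := by rw [hsigdef, div_lt_one (by linarith)]; exact hmumaxlt
  obtain ⟨K, hKdef⟩ : ∃ x:ℝ, x = (Cl + Cu)*(2*(k:ℝ)-1)^2 + 1/sig + 1 := ⟨_, rfl⟩
  have hKpos : 0 < K := by rw [hKdef]; positivity
  have hsmall : ∀ m : ℕ, m < 2 → 1 ≤ K * sig ^ m := by
    intro m hm
    interval_cases m
    · rw [pow_zero, mul_one, hKdef]
      have h1σ : 1 ≤ 1/sig := by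
        rw [le_div_iff₀ hsigpos]; linarith
      have hnn : (0:ℝ) ≤ (Cl + Cu)*(2*(k:ℝ)-1)^2 := by positivity
      linarith
    · rw [pow_one, hKdef]
      have e : ((Cl + Cu)*(2*(k:ℝ)-1)^2 + 1/sig + 1)*sig
          = ((Cl + Cu)*(2*(k:ℝ)-1)^2 + 1)*sig + (1/sig)*sig := by ring
      have e2 : (1/sig)*sig = 1 := by field_simp
      have p : 0 ≤ ((Cl + Cu)*(2*(k:ℝ)-1)^2 + 1)*sig := by positivity
      rw [e, e2]
      linarith
  refine ⟨K, hKpos, sig, hsigpos, hsiglt1, ?_⟩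
  intro n
  -- identify the counts
  set P : List (Letter k) → Prop := fun w =>
    1 / (2 * (k : ℝ)) - ε / 2 < ((w.count a : ℝ)) / n ∧ ((w.count a : ℝ)) / n < 1 / (2 * (k : ℝ)) + ε / 2
    with hPdef
  have hTcard : {g : FG k | IsCyclicallyReduced g ∧ wordLength g = n ∧
          1 / (2 * (k : ℝ)) - ε / 2 < ((FreeGroup.toWord g).count a : ℝ) / n ∧
          ((FreeGroup.toWord g).count a : ℝ) / n < 1 / (2 * (k : ℝ)) + ε / 2}.ncard
      = ((KSS.cwords k n).filter P).card := KSS.ncard_eq_card n P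
  rw [hTcard, KSS.gammaC_eq n]
  set Tn := ((KSS.cwords k n).filter P).card with hTndef
  set Gn := (KSS.cwords k n).card with hGndef
  have hTG : Tn ≤ Gn := Finset.card_le_card (Finset.filter_subset _ _)
  -- trivial bound on the ratio
  have hratio0 : 0 ≤ (Tn:ℝ)/(Gn:ℝ) := div_nonneg (Nat.cast_nonneg _) (Nat.cast_nonneg _)
  have hratio1 : (Tn:ℝ)/(Gn:ℝ) ≤ 1 := by
    rcases Nat.eq_zero_or_pos Gn with h0 | hpos
    · rw [h0]; simp
    · rw [div_le_one (by exact_mod_cast hpos)]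
      exact_mod_cast hTG
  have habs : |1 - (Tn:ℝ)/(Gn:ℝ)| = 1 - (Tn:ℝ)/(Gn:ℝ) := abs_of_nonneg (by linarith)
  rw [habs]
  by_cases hn2 : n < 2
  · linarith [hsmall n hn2]
  · push_neg at hn2
    have hnpos : 0 < n := by omega
    have hnR : (0:ℝ) < (n:ℝ) := by exact_mod_cast hnpos
    -- the bad sets
    set Blo := (KSS.words k n).filter (fun w => ((w.count a : ℝ)) ≤ lo * n) with hBlodef
    set Bhi := (KSS.words k n).filter (fun w => hi * n ≤ ((w.count a : ℝ))) with hBhidef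
    -- union bound
    have hunion : Gn ≤ Tn + (Blo.card + Bhi.card) := by
      have hsub : KSS.cwords k n ⊆ ((KSS.cwords k n).filter P) ∪ (Blo ∪ Bhi) := by
        intro w hw
        have hwords : w ∈ KSS.words k n := Finset.mem_of_mem_filter w hw
        by_cases hP : P w
        · exact Finset.mem_union_left _ (Finset.mem_filter.mpr ⟨hw, hP⟩)
        · apply Finset.mem_union_right
          simp only [hPdef] at hP
          push_neg at hP
          rcases le_or_gt ((w.count a : ℝ)/(n:ℝ)) (1 / (2 * (k : ℝ)) - ε / 2) with hcase | hcase
          · apply Finset.mem_union_left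
            rw [hBlodef, Finset.mem_filter]
            refine ⟨hwords, ?_⟩
            have h' : ((w.count a : ℝ)) ≤ (1 / (2 * (k : ℝ)) - ε / 2) * n := by
              rw [div_le_iff₀ hnR] at hcase
              exact hcase
            have hle : (1 / (2 * (k : ℝ)) - ε / 2) ≤ lo := by rw [hlodef]; linarith
            calc ((w.count a : ℝ)) ≤ (1 / (2 * (k : ℝ)) - ε / 2) * n := h'
              _ ≤ lo * n := mul_le_mul_of_nonneg_right hle hnR.le
          · apply Finset.mem_union_right
            rw [hBhidef, Finset.mem_filter]
            refine ⟨hwords, ?_⟩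
            have h' := hP hcase
            have h'' : (1 / (2 * (k : ℝ)) + ε / 2) * n ≤ ((w.count a : ℝ)) := by
              rw [le_div_iff₀ hnR] at h'
              exact h'
            have hle : hi ≤ 1 / (2 * (k : ℝ)) + ε / 2 := by rw [hhidef]; linarith
            calc hi * n ≤ (1 / (2 * (k : ℝ)) + ε / 2) * n := mul_le_mul_of_nonneg_right hle hnR.le
              _ ≤ ((w.count a : ℝ)) := h''
      calc Gn ≤ (((KSS.cwords k n).filter P) ∪ (Blo ∪ Bhi)).card := Finset.card_le_card hsub
        _ ≤ ((KSS.cwords k n).filter P).card + (Blo ∪ Bhi).card := Finset.card_union_le _ _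
        _ ≤ Tn + (Blo.card + Bhi.card) := by
            have := Finset.card_union_le Blo Bhi
            omega
    -- Chernoff bounds on the bad sets
    have hBhibound : (Bhi.card : ℝ) ≤ Cu * mu1 ^ n := by
      have hp : ∀ w ∈ KSS.words k n, (fun w => hi * n ≤ ((w.count a : ℝ))) w →
          tu ^ (hi * (n:ℝ)) ≤ tu ^ (w.count a) := by
        intro w _ hw
        rw [← Real.rpow_natCast tu (w.count a)]
        exact Real.rpow_le_rpow_of_exponent_le htu1.le hw
      have hcount := KSS.card_filter_le_S a tu lu Xu Yu htupos hlupos hXupos hYupos hk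
        (by omega : 1 ≤ n) _ (tu ^ (hi * (n:ℝ))) (Real.rpow_pos_of_pos htupos _).le hp
      have hS := KSS.S_le a tu lu Xu Yu hk h1u h2u h3u' htupos hlupos hXupos hYupos n
      have hT0eq : tu ^ (hi * (n:ℝ)) = (tu ^ hi) ^ n := by
        rw [Real.rpow_mul htupos.le, Real.rpow_natCast]
      have hfact : Cu * mu1 ^ n * (tu ^ (hi * (n:ℝ)) * KSS.vmin Xu Yu)
          = lu ^ n * (KSS.c0 k tu Xu Yu / lu) := by
        rw [hT0eq, hCudef, hmu1def, div_pow]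
        field_simp
      have hpos : 0 < tu ^ (hi * (n:ℝ)) * KSS.vmin Xu Yu :=
        mul_pos (Real.rpow_pos_of_pos htupos _) hvminu
      have : (Bhi.card : ℝ) * (tu ^ (hi * (n:ℝ)) * KSS.vmin Xu Yu)
          ≤ Cu * mu1 ^ n * (tu ^ (hi * (n:ℝ)) * KSS.vmin Xu Yu) := by
        rw [hfact]
        exact le_trans hcount hS
      exact le_of_mul_le_mul_right this hpos
    have hBlobound : (Blo.card : ℝ) ≤ Cl * mu2 ^ n := by
      have hp : ∀ w ∈ KSS.words k n, (fun w => ((w.count a : ℝ)) ≤ lo * n) w →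
          tl ^ (lo * (n:ℝ)) ≤ tl ^ (w.count a) := by
        intro w _ hw
        rw [← Real.rpow_natCast tl (w.count a)]
        exact Real.rpow_le_rpow_of_exponent_ge htl0 htl1.le hw
      have hcount := KSS.card_filter_le_S a tl ll Xl Yl htl0 hllpos hXlpos hYlpos hk
        (by omega : 1 ≤ n) _ (tl ^ (lo * (n:ℝ))) (Real.rpow_pos_of_pos htl0 _).le hp
      have hS := KSS.S_le a tl ll Xl Yl hk h1l h2l h3l' htl0 hllpos hXlpos hYlpos n
      have hT0eq : tl ^ (lo * (n:ℝ)) = (tl ^ lo) ^ n := by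
        rw [Real.rpow_mul htl0.le, Real.rpow_natCast]
      have hfact : Cl * mu2 ^ n * (tl ^ (lo * (n:ℝ)) * KSS.vmin Xl Yl)
          = ll ^ n * (KSS.c0 k tl Xl Yl / ll) := by
        rw [hT0eq, hCldef, hmu2def, div_pow]
        field_simp
      have hpos : 0 < tl ^ (lo * (n:ℝ)) * KSS.vmin Xl Yl :=
        mul_pos (Real.rpow_pos_of_pos htl0 _) hvminl
      have : (Blo.card : ℝ) * (tl ^ (lo * (n:ℝ)) * KSS.vmin Xl Yl)
          ≤ Cl * mu2 ^ n * (tl ^ (lo * (n:ℝ)) * KSS.vmin Xl Yl) := by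
        rw [hfact]
        exact le_trans hcount hS
      exact le_of_mul_le_mul_right this hpos
    -- lower bound on Gn
    have hGn : ((2*(k:ℝ)-1)) ^ (n-2) ≤ (Gn : ℝ) := by
      have h := KSS.card_cwords_ge hk (n-2)
      have he : n - 2 + 2 = n := by omega
      rw [he] at h
      have hcast : (((2*k-1:ℕ)) ^ (n-2) : ℝ) = (2*(k:ℝ)-1) ^ (n-2) := by
        push_cast [Nat.cast_sub (by omega : 1 ≤ 2*k)]
        ring_nf
      rw [← hcast]
      exact_mod_cast h
    have hGnpos : (0:ℝ) < (Gn:ℝ) := lt_of_lt_of_le (pow_pos (by linarith : (0:ℝ) < 2*(k:ℝ)-1) _) hGn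
    -- combine
    have hmain : 1 - (Tn:ℝ)/(Gn:ℝ) ≤ ((Blo.card : ℝ) + Bhi.card)/(Gn:ℝ) := by
      have h1' : (1:ℝ) ≤ (((Blo.card : ℝ) + Bhi.card) + Tn)/(Gn:ℝ) := by
        rw [le_div_iff₀ hGnpos, one_mul]
        have : (Gn:ℝ) ≤ (Tn:ℝ) + ((Blo.card:ℝ) + (Bhi.card:ℝ)) := by exact_mod_cast hunion
        linarith
      have h2' : (((Blo.card : ℝ) + Bhi.card) + Tn)/(Gn:ℝ)
          = ((Blo.card : ℝ) + Bhi.card)/(Gn:ℝ) + (Tn:ℝ)/(Gn:ℝ) := add_div _ _ _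
      linarith [h1', h2'.symm.le, h2'.le]
    have hbadsum : (Blo.card : ℝ) + Bhi.card ≤ (Cl + Cu) * mumax ^ n := by
      have hm1 : mu1 ^ n ≤ mumax ^ n := pow_le_pow_left₀ hmu1pos.le hmu1le n
      have hm2 : mu2 ^ n ≤ mumax ^ n := pow_le_pow_left₀ hmu2pos.le hmu2le n
      have e : (Cl + Cu) * mumax ^ n = Cl * mumax ^ n + Cu * mumax ^ n := by ring
      have b1 : Cl * mu2 ^ n ≤ Cl * mumax ^ n := mul_le_mul_of_nonneg_left hm2 hClpos.le
      have b2 : Cu * mu1 ^ n ≤ Cu * mumax ^ n := mul_le_mul_of_nonneg_left hm1 hCupos.le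
      linarith
    have hstep2 : ((Blo.card : ℝ) + Bhi.card)/(Gn:ℝ)
        ≤ ((Cl + Cu) * mumax ^ n)/((2*(k:ℝ)-1) ^ (n-2)) := by
      have hd : (0:ℝ) < (2*(k:ℝ)-1) ^ (n-2) := pow_pos (by linarith) _
      have hnum : (0:ℝ) ≤ (Cl + Cu) * mumax ^ n :=
        mul_nonneg (by linarith) (pow_nonneg hmumaxpos.le n)
      calc ((Blo.card : ℝ) + Bhi.card)/(Gn:ℝ)
          ≤ ((Cl + Cu) * mumax ^ n)/(Gn:ℝ) := (div_le_div_iff_of_pos_right hGnpos).mpr hbadsum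
        _ ≤ ((Cl + Cu) * mumax ^ n)/((2*(k:ℝ)-1) ^ (n-2)) := by
            rw [div_le_div_iff₀ hGnpos hd]
            exact mul_le_mul_of_nonneg_left hGn hnum
    have hfinal : ((Cl + Cu) * mumax ^ n)/((2*(k:ℝ)-1) ^ (n-2)) = ((Cl + Cu)*(2*(k:ℝ)-1)^2) * sig ^ n := by
      have hepow : (2*(k:ℝ)-1) ^ n = (2*(k:ℝ)-1) ^ (n-2) * (2*(k:ℝ)-1)^2 := by
        rw [← pow_add]
        congr 1
        omega
      have h2k1 : (0:ℝ) < 2*(k:ℝ)-1 := by linarith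
      have hq : ((2*(k:ℝ)-1) ^ (n-2)) ≠ 0 := ne_of_gt (pow_pos h2k1 _)
      rw [hsigdef, div_pow, hepow]
      field_simp
    have hKbound : ((Cl + Cu)*(2*(k:ℝ)-1)^2) * sig ^ n ≤ K * sig ^ n := by
      apply mul_le_mul_of_nonneg_right _ (pow_nonneg hsigpos.le n)
      rw [hKdef]
      have h1s : 0 < 1/sig := one_div_pos.mpr hsigpos
      linarith
    linarith [hmain, hstep2, hfinal.le, hKbound]
end

section
/- Let A ⊆ C be a set of cyclically reduced words and let A' be the set of all freely reduced words in F_k whose cyclically reduced form belongs to A. If A is exponentially negligible in C, then A' is exponentially negligible in F_k; and if A is exponentially generic in C, then A' is exponentially generic in F_k. -/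
namespace KSS
variable {k : ℕ}

/-- The no-cancellation relation between adjacent letters. -/
def Ok {k : ℕ} (a b : Letter k) : Prop := b ≠ linv a

lemma ok_iff {a b : Letter k} : Ok a b ↔ ¬ (a.1 = b.1 ∧ a.2 = !b.2) := by
  unfold Ok linv
  constructor
  · rintro h ⟨h1, h2⟩
    exact h (Prod.ext h1.symm (by cases a.2 <;> cases b.2 <;> simp_all))
  · rintro h rfl
    exact h ⟨rfl, by cases a.2 <;> simp⟩

lemma reduce_eq_self_of_chain : ∀ {w : List (Letter k)}, List.Chain' Ok w →
    FreeGroup.reduce w = w := by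
  intro w
  induction w with
  | nil => intro _; rfl
  | cons x t ih =>
    intro h
    have ht : List.Chain' Ok t := h.tail
    rw [FreeGroup.reduce.cons, ih ht]
    cases t with
    | nil => rfl
    | cons b t' =>
      have hob : Ok x b := (List.isChain_cons_cons.1 h).1
      simp only []
      rw [if_neg]
      exact ok_iff.1 hob

lemma chain_of_reduce_eq_self : ∀ {w : List (Letter k)}, FreeGroup.reduce w = w →
    List.Chain' Ok w := by
  intro w
  induction w with
  | nil => intro _; exact List.isChain_nil
  | cons x t ih =>
    intro h
    rw [FreeGroup.reduce.cons] at h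
    cases hr : FreeGroup.reduce t with
    | nil =>
      rw [hr] at h
      simp only [] at h
      have : t = [] := by
        cases t with
        | nil => rfl
        | cons y t2 =>
          exfalso
          have := congrArg List.length h
          have h2 : (FreeGroup.reduce (y :: t2)).length ≤ (y :: t2).length :=
            FreeGroup.Red.length_le FreeGroup.reduce.red
          rw [hr] at h2
          simp at this h2
      subst this
      exact List.isChain_singleton x
    | cons b t' =>
      rw [hr] at h
      simp only [] at h
      by_cases hc : x.1 = b.1 ∧ x.2 = !b.2
      · rw [if_pos hc] at h
        exfalso
        have h1 := congrArg List.length h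
        have h2 : (FreeGroup.reduce t).length ≤ t.length :=
          FreeGroup.Red.length_le FreeGroup.reduce.red
        rw [hr] at h2
        simp at h1 h2
        omega
      · rw [if_neg hc] at h
        have ht : t = b :: t' := (List.cons_injective.eq_iff.mp h ▸ rfl : x :: t = x :: (b :: t')) |> fun hh => (List.cons.inj hh).2
        have : FreeGroup.reduce t = t := by rw [hr, ht]
        have hct := ih this
        rw [ht]
        exact List.isChain_cons_cons.2 ⟨ok_iff.2 hc, ht ▸ hct⟩

lemma reduced_iff_chain {w : List (Letter k)} :
    FreeGroup.reduce w = w ↔ List.Chain' Ok w :=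
  ⟨chain_of_reduce_eq_self, reduce_eq_self_of_chain⟩

lemma toWord_chain (g : FG k) : List.Chain' Ok (FreeGroup.toWord g) :=
  chain_of_reduce_eq_self (FreeGroup.reduce_toWord g)

lemma toWord_mk_of_chain {w : List (Letter k)} (h : List.Chain' Ok w) :
    (FreeGroup.mk w).toWord = w := by
  rw [FreeGroup.toWord_mk, reduce_eq_self_of_chain h]

lemma wordLength_mk_of_chain {w : List (Letter k)} (h : List.Chain' Ok w) :
    wordLength (FreeGroup.mk w) = w.length := by
  rw [wordLength, toWord_mk_of_chain h]

lemma cyclicallyReduced_iff {w : List (Letter k)} :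
    CyclicallyReducedWord w ↔ List.Chain' Ok (w ++ w) := reduced_iff_chain

lemma chain_of_cyclicallyReduced {w : List (Letter k)} (h : CyclicallyReducedWord w) :
    List.Chain' Ok w :=
  (cyclicallyReduced_iff.1 h).prefix ⟨w, rfl⟩

lemma cyc_junction {w : List (Letter k)} (h : CyclicallyReducedWord w) :
    ∀ x ∈ w.getLast?, ∀ y ∈ w.head?, Ok x y :=
  (List.isChain_append.1 (cyclicallyReduced_iff.1 h)).2.2

/-- inv of mk of a singleton -/
lemma inv_mk_singleton (c : Letter k) :
    (FreeGroup.mk [c])⁻¹ = FreeGroup.mk [linv c] := by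
  rw [FreeGroup.inv_mk]
  rfl

lemma mk_singleton_mul_inv (c : Letter k) :
    FreeGroup.mk [c] * FreeGroup.mk [linv c] = 1 := by
  rw [← inv_mk_singleton, mul_inv_cancel]


lemma chain_three {w : List (Letter k)} (h : List.Chain' Ok (w ++ w)) :
    List.Chain' Ok (w ++ w ++ w) := by
  rcases List.isChain_append.1 h with ⟨h1, h2, h3⟩
  refine List.isChain_append.2 ⟨h, h1, ?_⟩
  intro x hx y hy
  rw [List.getLast?_append, Option.or_self] at hx
  exact h3 x hx y hy

lemma cyclicallyReduced_rotate {w : List (Letter k)} (h : CyclicallyReducedWord w) (r : ℕ) :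
    CyclicallyReducedWord (w.rotate r) := by
  rcases Nat.eq_zero_or_pos w.length with hw | hw
  · have : w = [] := List.length_eq_zero_iff.1 hw
    subst this; simpa using h
  have hmod : w.rotate r = w.rotate (r % w.length) := (List.rotate_mod w r).symm
  rw [hmod]
  set r' := r % w.length with hr'
  have hle : r' ≤ w.length := le_of_lt (Nat.mod_lt _ hw)
  rw [List.rotate_eq_drop_append_take hle]
  rw [cyclicallyReduced_iff]
  set T := w.take r' with hT
  set D := w.drop r' with hD
  have hTD : T ++ D = w := List.take_append_drop r' w
  refine List.IsChain.infix (chain_three (cyclicallyReduced_iff.1 h)) ⟨T, D, ?_⟩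
  rw [← hTD]
  simp only [List.append_assoc]

lemma toWord_mk_rotate {w : List (Letter k)} (h : CyclicallyReducedWord w) (r : ℕ) :
    (FreeGroup.mk (w.rotate r)).toWord = w.rotate r :=
  toWord_mk_of_chain (chain_of_cyclicallyReduced (cyclicallyReduced_rotate h r))

lemma isCyclicallyReduced_mk_rotate {w : List (Letter k)} (h : CyclicallyReducedWord w) (r : ℕ) :
    IsCyclicallyReduced (FreeGroup.mk (w.rotate r)) := by
  unfold IsCyclicallyReduced
  rw [toWord_mk_rotate h r]
  exact cyclicallyReduced_rotate h r

lemma linv_ne (a : Letter k) : linv a ≠ a := by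
  intro h
  have := congrArg Prod.snd h
  simp [linv] at this

/-- structure of a reduced but not cyclically reduced word -/
lemma split_word {w : List (Letter k)} (hchain : List.Chain' Ok w)
    (hnc : ¬ List.Chain' Ok (w ++ w)) :
    ∃ (a : Letter k) (m : List (Letter k)), w = linv a :: (m ++ [a]) := by
  have hjunction : ¬ (∀ x ∈ w.getLast?, ∀ y ∈ w.head?, Ok x y) := by
    intro hj
    exact hnc (List.isChain_append.2 ⟨hchain, hchain, hj⟩)
  push_neg at hjunction
  obtain ⟨a, ha, b, hb, hab⟩ := hjunction
  have hbla : b = linv a := by simpa [Ok] using hab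
  obtain ⟨l1, hl1⟩ := List.getLast?_eq_some_iff.1 ha
  obtain ⟨l2, hl2⟩ := List.head?_eq_some_iff.1 hb
  cases l1 with
  | nil =>
    exfalso
    rw [hl1] at hl2
    simp at hl2
    exact linv_ne b (by rw [hl2.1] at hbla; exact hbla.symm)
  | cons c m =>
    refine ⟨a, m, ?_⟩
    rw [hl1] at hl2 ⊢
    simp at hl2
    rw [← hbla, ← hl2.1]
    simp

/-- Every element is conjugate to a cyclically reduced element. -/
lemma exists_core (g : FG k) : ∃ x u : FG k, IsCyclicallyReduced u ∧ g = x * u * x⁻¹ := by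
  generalize hn : wordLength g = n
  induction n using Nat.strong_induction_on generalizing g with
  | _ n ih =>
  by_cases hc : IsCyclicallyReduced g
  · exact ⟨1, g, hc, by group⟩
  · have hchain : List.Chain' Ok (FreeGroup.toWord g) := toWord_chain g
    have hnc : ¬ List.Chain' Ok (FreeGroup.toWord g ++ FreeGroup.toWord g) := fun h =>
      hc (cyclicallyReduced_iff.2 h)
    obtain ⟨a, m, hw⟩ := split_word hchain hnc
    have hg : g = FreeGroup.mk [linv a] * FreeGroup.mk m * FreeGroup.mk [a] := by
      conv_lhs => rw [← FreeGroup.mk_toWord (x := g), hw]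
      rw [FreeGroup.mul_mk, FreeGroup.mul_mk]
      simp
    have hba : FreeGroup.mk [linv a] = (FreeGroup.mk [a])⁻¹ := (inv_mk_singleton a).symm
    have hchain' : List.Chain' Ok m := by
      apply hchain.infix
      exact ⟨[linv a], [a], by rw [hw]; simp⟩
    have hlen : wordLength (FreeGroup.mk m) < n := by
      rw [wordLength_mk_of_chain hchain']
      have h1 := congrArg List.length hw
      simp at h1
      have : wordLength g = (FreeGroup.toWord g).length := rfl
      omega
    obtain ⟨x, u, hu, hgx⟩ := ih _ hlen (FreeGroup.mk m) rfl
    refine ⟨(FreeGroup.mk [a])⁻¹ * x, u, hu, ?_⟩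
    rw [hg, hba, hgx]
    group

lemma invRev_concat (s : List (Letter k)) (c : Letter k) :
    FreeGroup.invRev (s ++ [c]) = linv c :: FreeGroup.invRev s := by
  simp [FreeGroup.invRev, linv]

/-- Conjugating a cyclically reduced element gives an element whose reduced word is a
reduced product of a conjugator word and a rotation of the original word. -/
lemma mk_cancel_cons (c : Letter k) (l : List (Letter k)) :
    FreeGroup.mk (c :: linv c :: l) = FreeGroup.mk l := by
  have h : (c :: linv c :: l) = [c] ++ ([linv c] ++ l) := rfl
  rw [h, ← FreeGroup.mul_mk, ← FreeGroup.mul_mk, ← mul_assoc, mk_singleton_mul_inv, one_mul]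

lemma conj_form (x u : FG k) : IsCyclicallyReduced u →
    ∃ (y : FG k) (r : ℕ),
      x * u * x⁻¹ = y * FreeGroup.mk ((FreeGroup.toWord u).rotate r) * y⁻¹ ∧
      FreeGroup.toWord (x * u * x⁻¹) =
        FreeGroup.toWord y ++ (FreeGroup.toWord u).rotate r ++ FreeGroup.toWord y⁻¹ := by
  generalize hn : wordLength x = n
  induction n using Nat.strong_induction_on generalizing x u with
  | _ n ih =>
  intro hu
  by_cases hu1 : u = 1
  · subst hu1
    refine ⟨1, 0, ?_, ?_⟩
    · simp [← FreeGroup.one_eq_mk]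
    · simp
  -- notation
  have huwne : FreeGroup.toWord u ≠ [] := fun h => hu1 (FreeGroup.toWord_eq_nil_iff.1 h)
  by_cases hch : List.Chain' Ok (FreeGroup.toWord x ++ FreeGroup.toWord u ++ FreeGroup.toWord x⁻¹)
  · -- no cancellation: done
    refine ⟨x, 0, by simp [FreeGroup.mk_toWord], ?_⟩
    rw [List.rotate_zero]
    have hprod : x * u * x⁻¹ =
        FreeGroup.mk (FreeGroup.toWord x ++ FreeGroup.toWord u ++ FreeGroup.toWord x⁻¹) := by
      symm
      rw [← FreeGroup.mul_mk, ← FreeGroup.mul_mk, FreeGroup.mk_toWord, FreeGroup.mk_toWord,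
        FreeGroup.mk_toWord]
    rw [hprod, toWord_mk_of_chain hch]
  · -- cancellation occurs
    have hx1 : x ≠ 1 := by
      rintro rfl
      apply hch
      simpa using chain_of_cyclicallyReduced hu
    have hxwne : FreeGroup.toWord x ≠ [] := fun h => hx1 (FreeGroup.toWord_eq_nil_iff.1 h)
    -- write xw = s ++ [c]
    obtain ⟨s, c, hs⟩ : ∃ s c, FreeGroup.toWord x = s ++ [c] := by
      rcases List.eq_nil_or_concat (FreeGroup.toWord x) with h | ⟨s, c, h⟩
      · exact absurd h hxwne
      · exact ⟨s, c, by simpa using h⟩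
    have hchains : List.Chain' Ok s := (toWord_chain x).prefix ⟨[c], hs.symm⟩
    have hxdec : x = FreeGroup.mk s * FreeGroup.mk [c] := by
      rw [FreeGroup.mul_mk, ← hs, FreeGroup.mk_toWord]
    have hxiw : FreeGroup.toWord x⁻¹ = linv c :: FreeGroup.invRev s := by
      rw [FreeGroup.toWord_inv, hs, invRev_concat]
    have hlenx : wordLength x = s.length + 1 := by
      rw [wordLength, hs]; simp
    have hlens : (FreeGroup.mk s).toWord.length = s.length := by
      rw [toWord_mk_of_chain hchains]
    -- the cyclic junction of u is fine
    have hujunction : ∀ p ∈ (FreeGroup.toWord u).getLast?,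
        ∀ q ∈ (FreeGroup.toWord u).head?, Ok p q := cyc_junction hu
    -- one of the two junctions fails
    have hchainxi : List.Chain' Ok (FreeGroup.toWord x⁻¹) := toWord_chain x⁻¹
    have hchainu : List.Chain' Ok (FreeGroup.toWord u) := chain_of_cyclicallyReduced hu
    by_cases hJ1 : (FreeGroup.toWord u).head? = some (linv c)
    · -- case A: cancellation between x and u
      obtain ⟨t, ht⟩ := List.head?_eq_some_iff.1 hJ1
      have hrot1 : (FreeGroup.toWord u).rotate 1 = t ++ [linv c] := by
        rw [List.rotate_eq_drop_append_take (by rw [ht]; simp), ht]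
        simp
      have hconj : FreeGroup.mk [c] * u * (FreeGroup.mk [c])⁻¹ =
          FreeGroup.mk ((FreeGroup.toWord u).rotate 1) := by
        rw [inv_mk_singleton, hrot1]
        conv_lhs => rw [← FreeGroup.mk_toWord (x := u)]
        rw [FreeGroup.mul_mk, FreeGroup.mul_mk, ht]
        have hl : ([c] ++ (linv c :: t)) ++ [linv c] = c :: linv c :: (t ++ [linv c]) := by simp
        rw [hl, mk_cancel_cons]
      have hu' : IsCyclicallyReduced (FreeGroup.mk ((FreeGroup.toWord u).rotate 1)) :=
        isCyclicallyReduced_mk_rotate hu 1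
      have hxux : x * u * x⁻¹ =
          FreeGroup.mk s * FreeGroup.mk ((FreeGroup.toWord u).rotate 1) * (FreeGroup.mk s)⁻¹ := by
        rw [hxdec, ← hconj]; group
      have hlen' : (FreeGroup.mk s).toWord.length < n := by
        rw [hlens]; omega
      obtain ⟨y, r', h1, h2⟩ := ih _ hlen' (FreeGroup.mk s)
        (FreeGroup.mk ((FreeGroup.toWord u).rotate 1)) rfl hu'
      rw [toWord_mk_rotate hu 1, List.rotate_rotate] at h1 h2
      exact ⟨y, 1 + r', by rw [hxux, h1], by rw [hxux, h2]⟩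
    · -- case B: cancellation between u and x⁻¹
      -- first derive that the u/x⁻¹ junction fails: getLast uw = c
      have hJ2 : (FreeGroup.toWord u).getLast? = some c := by
        by_contra hJ2
        apply hch
        -- assemble the chain
        have hmid : List.Chain' Ok (FreeGroup.toWord u ++ FreeGroup.toWord x⁻¹) := by
          refine List.isChain_append.2 ⟨hchainu, hchainxi, ?_⟩
          intro p hp q hq
          rw [hxiw] at hq
          simp at hq
          subst hq
          -- Ok p (linv c): fails iff linv c = linv p iff p = c
          intro hbad
          apply hJ2
          have hbad' : linv c = linv p := hbad
          have : p = c := by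
            have := congrArg linv hbad'
            simpa [linv] using this.symm
          rw [← this]
          exact hp
        rw [List.append_assoc]
        refine List.isChain_append.2 ⟨toWord_chain x, hmid, ?_⟩
        intro p hp q hq
        rw [hs, List.getLast?_concat] at hp
        rw [List.head?_append_of_ne_nil _ huwne] at hq
        simp at hp
        subst hp
        intro hbad
        apply hJ1
        have hbad' : q = linv c := hbad
        rw [hbad'] at hq
        exact hq
      obtain ⟨t, ht⟩ := List.getLast?_eq_some_iff.1 hJ2
      have hlt : 1 ≤ (FreeGroup.toWord u).length := by
        rw [ht]; simp
      have hrotm : (FreeGroup.toWord u).rotate ((FreeGroup.toWord u).length - 1) = c :: t := by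
        rw [List.rotate_eq_drop_append_take (Nat.sub_le _ _), ht]
        have hlt' : t.length = (t ++ [c]).length - 1 := by simp
        rw [← hlt']
        rw [List.drop_left, List.take_left]
        rfl
      have hconj : FreeGroup.mk [c] * u * (FreeGroup.mk [c])⁻¹ =
          FreeGroup.mk ((FreeGroup.toWord u).rotate ((FreeGroup.toWord u).length - 1)) := by
        rw [inv_mk_singleton, hrotm]
        conv_lhs => rw [← FreeGroup.mk_toWord (x := u)]
        rw [FreeGroup.mul_mk, FreeGroup.mul_mk, ht]
        have hl : ([c] ++ (t ++ [c])) ++ [linv c] = (c :: t) ++ (c :: linv c :: []) := by simp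
        rw [hl, ← FreeGroup.mul_mk, mk_cancel_cons, ← FreeGroup.one_eq_mk, mul_one]
      have hu' : IsCyclicallyReduced
          (FreeGroup.mk ((FreeGroup.toWord u).rotate ((FreeGroup.toWord u).length - 1))) :=
        isCyclicallyReduced_mk_rotate hu _
      have hxux : x * u * x⁻¹ =
          FreeGroup.mk s *
            FreeGroup.mk ((FreeGroup.toWord u).rotate ((FreeGroup.toWord u).length - 1)) *
            (FreeGroup.mk s)⁻¹ := by
        rw [hxdec, ← hconj]; group
      have hlen' : (FreeGroup.mk s).toWord.length < n := by
        rw [hlens]; omega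
      obtain ⟨y, r', h1, h2⟩ := ih _ hlen' (FreeGroup.mk s) _ rfl hu'
      rw [toWord_mk_rotate hu _, List.rotate_rotate] at h1 h2
      exact ⟨y, (FreeGroup.toWord u).length - 1 + r', by rw [hxux, h1], by rw [hxux, h2]⟩

/-! ### Counting infrastructure -/

/-- Build a word from a starting letter and a list of "choices", where `nxt` chooses
the next letter avoiding the inverse of the previous one. -/
def chainWord {k m : ℕ} (nxt : Letter k → Fin m → Letter k) :
    Letter k → List (Fin m) → List (Letter k)
  | _, [] => []
  | p, c :: cs => nxt p c :: chainWord nxt (nxt p c) cs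

lemma chainWord_length {m : ℕ} (nxt : Letter k → Fin m → Letter k) :
    ∀ (cs : List (Fin m)) (p : Letter k), (chainWord nxt p cs).length = cs.length := by
  intro cs
  induction cs with
  | nil => intro p; rfl
  | cons c cs ih => intro p; simp [chainWord, ih]

lemma chainWord_chain {m : ℕ} (nxt : Letter k → Fin m → Letter k)
    (h1 : ∀ p c, nxt p c ≠ linv p) :
    ∀ (cs : List (Fin m)) (p : Letter k), List.Chain Ok p (chainWord nxt p cs) := by
  intro cs
  induction cs with
  | nil => intro p; exact List.Chain.nil
  | cons c cs ih => intro p; exact List.Chain.cons (h1 p c) (ih (nxt p c))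

lemma chain_cons_chain' {p : Letter k} {w : List (Letter k)} (h : List.Chain Ok p w) :
    List.Chain' Ok (p :: w) := h

lemma chainWord_injective {m : ℕ} (nxt : Letter k → Fin m → Letter k)
    (h2 : ∀ p, Function.Injective (nxt p)) :
    ∀ (cs1 cs2 : List (Fin m)) (p : Letter k),
      chainWord nxt p cs1 = chainWord nxt p cs2 → cs1 = cs2 := by
  intro cs1
  induction cs1 with
  | nil =>
    intro cs2 p h
    cases cs2 with
    | nil => rfl
    | cons c cs => exact absurd h (by simp [chainWord])
  | cons c cs ih =>
    intro cs2 p h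
    cases cs2 with
    | nil => exact absurd h (by simp [chainWord])
    | cons c' cs' =>
      simp only [chainWord, List.cons.injEq] at h
      obtain ⟨hc, hcs⟩ := h
      have hcc : c = c' := h2 p hc
      subst hcc
      exact congrArg (c :: ·) (ih cs' (nxt p c) hcs)

lemma chainWord_decode {m : ℕ} (nxt : Letter k → Fin m → Letter k)
    (h3 : ∀ p y, y ≠ linv p → ∃ c, nxt p c = y) :
    ∀ (w : List (Letter k)) (p : Letter k), List.Chain Ok p w →
      ∃ cs, chainWord nxt p cs = w := by
  intro w
  induction w with
  | nil => intro p _; exact ⟨[], rfl⟩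
  | cons b w ih =>
    intro p h
    have hob : Ok p b := (List.isChain_cons_cons.1 h).1
    have hcw : List.Chain Ok b w := (List.isChain_cons_cons.1 h).2
    obtain ⟨c, hc⟩ := h3 p b hob
    obtain ⟨cs, hcs⟩ := ih b (by exact hcw)
    refine ⟨c :: cs, ?_⟩
    simp only [chainWord, hc]
    rw [hcs]

/-- A successor function on letters avoiding the inverse of the previous letter. -/
lemma exists_nxt (hk : 1 ≤ k) :
    ∃ nxt : Letter k → Fin (2*k-1) → Letter k,
      (∀ p c, nxt p c ≠ linv p) ∧ (∀ p, Function.Injective (nxt p)) ∧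
      (∀ p y, y ≠ linv p → ∃ c, nxt p c = y) := by
  have hcard : Fintype.card (Letter k) = (2*k-1) + 1 := by
    simp [Fintype.card_prod]
    omega
  let E : Letter k ≃ Fin ((2*k-1)+1) := Fintype.equivFinOfCardEq hcard
  refine ⟨fun p c => E.symm ((finSuccEquiv' (E (linv p))).symm (some c)), ?_, ?_, ?_⟩
  · intro p c h
    have h2 : (finSuccEquiv' (E (linv p))).symm (some c) = E (linv p) := by
      have := congrArg E h
      simpa using this
    have := congrArg (finSuccEquiv' (E (linv p))) h2
    rw [Equiv.apply_symm_apply, finSuccEquiv'_at] at this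
    exact Option.some_ne_none _ this
  · intro p c1 c2 h
    have := congrArg (fun z => (finSuccEquiv' (E (linv p))) (E z)) h
    simpa using this
  · intro p y hy
    rcases ho : (finSuccEquiv' (E (linv p))) (E y) with _ | c
    · exfalso
      have := congrArg (finSuccEquiv' (E (linv p))).symm ho
      rw [Equiv.symm_apply_apply, finSuccEquiv'_symm_none] at this
      exact hy (E.injective (by rw [this]))
    · refine ⟨c, ?_⟩
      have := congrArg (finSuccEquiv' (E (linv p))).symm ho
      rw [Equiv.symm_apply_apply] at this
      show E.symm ((finSuccEquiv' (E (linv p))).symm (some c)) = y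
      rw [← this, Equiv.symm_apply_apply]

/-- The ball of radius `n`. -/
def ball (k n : ℕ) : Set (FG k) := {g : FG k | wordLength g ≤ n}

lemma finite_ball (k n : ℕ) : (ball k n).Finite := by
  apply Set.Finite.of_finite_image (f := FreeGroup.toWord)
  · apply Set.Finite.subset (List.finite_length_le (Letter k) n)
    rintro w ⟨g, hg, rfl⟩
    exact hg
  · intro g1 _ g2 _ h
    exact FreeGroup.toWord_injective h

lemma finite_sub_ball {S : Set (FG k)} {n : ℕ} (h : S ⊆ ball k n) : S.Finite :=
  (finite_ball k n).subset h

lemma ball_lower (hk : 1 ≤ k) (n : ℕ) : (2*k-1)^n ≤ (ball k n).ncard := by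
  obtain ⟨nxt, h1, h2, h3⟩ := exists_nxt hk
  classical
  have : Finite (ball k n) := (finite_ball k n).to_subtype
  set p0 : Letter k := (⟨0, hk⟩, true) with hp0
  have hmem : ∀ cs : Fin n → Fin (2*k-1),
      FreeGroup.mk (chainWord nxt p0 (List.ofFn cs)) ∈ ball k n := by
    intro cs
    have hch : List.Chain' Ok (chainWord nxt p0 (List.ofFn cs)) :=
      (chain_cons_chain' (chainWord_chain nxt h1 _ p0)).tail
    rw [ball, Set.mem_setOf_eq, wordLength_mk_of_chain hch, chainWord_length]
    simp
  let F : (Fin n → Fin (2*k-1)) → ball k n :=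
    fun cs => ⟨FreeGroup.mk (chainWord nxt p0 (List.ofFn cs)), hmem cs⟩
  have hinj : Function.Injective F := by
    intro cs1 cs2 h
    have h' : FreeGroup.mk (chainWord nxt p0 (List.ofFn cs1)) =
        FreeGroup.mk (chainWord nxt p0 (List.ofFn cs2)) := congrArg Subtype.val h
    have hch1 : List.Chain' Ok (chainWord nxt p0 (List.ofFn cs1)) :=
      (chain_cons_chain' (chainWord_chain nxt h1 _ p0)).tail
    have hch2 : List.Chain' Ok (chainWord nxt p0 (List.ofFn cs2)) :=
      (chain_cons_chain' (chainWord_chain nxt h1 _ p0)).tail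
    have hw : chainWord nxt p0 (List.ofFn cs1) = chainWord nxt p0 (List.ofFn cs2) := by
      have := congrArg FreeGroup.toWord h'
      rwa [toWord_mk_of_chain hch1, toWord_mk_of_chain hch2] at this
    exact List.ofFn_injective (chainWord_injective nxt h2 _ _ p0 hw)
  calc (2*k-1)^n = Nat.card (Fin n → Fin (2*k-1)) := by simp
    _ ≤ Nat.card (ball k n) := Nat.card_le_card_of_injective F hinj
    _ = (ball k n).ncard := Nat.card_coe_set_eq _

lemma ball_upper (hk : 1 ≤ k) (n : ℕ) :
    (ball k n).ncard ≤ (2*k*(n+1)+1) * (2*k-1)^n := by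
  obtain ⟨nxt, h1, h2, h3⟩ := exists_nxt hk
  classical
  have hKpos : 0 < 2*k-1 := by omega
  have : Finite (ball k n) := (finite_ball k n).to_subtype
  set d : Fin (2*k-1) := ⟨0, hKpos⟩ with hd
  -- encode each nontrivial element by first letter, length-1, padded choices
  let T := Option (Letter k × Fin (n+1) × (Fin n → Fin (2*k-1)))
  -- decoding function: from data rebuild the word
  let dec : Letter k × Fin (n+1) × (Fin n → Fin (2*k-1)) → FG k := fun z =>
    FreeGroup.mk (z.1 :: chainWord nxt z.1 ((List.ofFn z.2.2).take z.2.1))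
  have hdec : ∀ g : FG k, g ∈ ball k n → g ≠ 1 → ∃ z, dec z = g ∧
      z.2.1.val + 1 = wordLength g := by
    intro g hg hg1
    have hwne : FreeGroup.toWord g ≠ [] := fun h => hg1 (FreeGroup.toWord_eq_nil_iff.1 h)
    obtain ⟨p, t, hpt⟩ : ∃ p t, FreeGroup.toWord g = p :: t := by
      cases hw : FreeGroup.toWord g with
      | nil => exact absurd hw hwne
      | cons p t => exact ⟨p, t, rfl⟩
    have hcht : List.Chain Ok p t := by
      have := toWord_chain g
      rw [hpt] at this
      exact this
    obtain ⟨cs, hcs⟩ := chainWord_decode nxt h3 t p hcht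
    have hlcs : cs.length = t.length := by rw [← hcs, chainWord_length]
    have hlg : wordLength g = t.length + 1 := by rw [wordLength, hpt]; simp
    have hgn : wordLength g ≤ n := hg
    have hltn : t.length < n + 1 := by omega
    refine ⟨(p, ⟨t.length, hltn⟩, fun i => cs.getD i d), ?_, by simp [hlg]⟩
    simp only [dec]
    have htake : (List.ofFn (fun i : Fin n => cs.getD i d)).take t.length = cs := by
      apply List.ext_getElem
      · simp; omega
      · intro i hi1 hi2
        rw [List.getElem_take, List.getElem_ofFn]
        exact List.getD_eq_getElem cs d hi2
    rw [htake, hcs, ← hpt, FreeGroup.mk_toWord]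
  -- build injection
  let F : ball k n → T := fun g =>
    if hg1 : (g : FG k) = 1 then none
    else some (Classical.choose (hdec g g.2 hg1))
  have hinj : Function.Injective F := by
    intro g1 g2 h
    simp only [F] at h
    by_cases h1 : (g1 : FG k) = 1 <;> by_cases h2 : (g2 : FG k) = 1
    · exact Subtype.ext (h1.trans h2.symm)
    · rw [dif_pos h1, dif_neg h2] at h; exact absurd h.symm (Option.some_ne_none _)
    · rw [dif_neg h1, dif_pos h2] at h; exact absurd h (Option.some_ne_none _)
    · rw [dif_neg h1, dif_neg h2] at h
      have hz := Option.some.inj h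
      have e1 := (Classical.choose_spec (hdec g1 g1.2 h1)).1
      have e2 := (Classical.choose_spec (hdec g2 g2.2 h2)).1
      apply Subtype.ext
      rw [← e1, ← e2, hz]
  calc (ball k n).ncard = Nat.card (ball k n) := (Nat.card_coe_set_eq _).symm
    _ ≤ Nat.card T := Nat.card_le_card_of_injective F hinj
    _ ≤ (2*k*(n+1)+1) * (2*k-1)^n := by
        have hK1 : 1 ≤ (2*k-1)^n := Nat.one_le_pow _ _ hKpos
        have hT : Nat.card T = k * 2 * ((n+1) * (2*k-1)^n) + 1 := by
          simp [T, Nat.card_eq_fintype_card]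
        rw [hT]
        nlinarith

/-! ### Conjugates of a set of cyclically reduced words -/

def conjSet {k : ℕ} (B : Set (FG k)) : Set (FG k) := {g | ∃ x u : FG k, u ∈ B ∧ g = x * u * x⁻¹}

def rotSet {k : ℕ} (B : Set (FG k)) (m : ℕ) : Set (FG k) :=
  {v | ∃ u ∈ B, wordLength u = m ∧ ∃ r, r ≤ m ∧ v = FreeGroup.mk ((FreeGroup.toWord u).rotate r)}

def conjStr {k : ℕ} (B : Set (FG k)) (n m : ℕ) : Set (FG k) :=
  {g | ∃ y v : FG k, v ∈ rotSet B m ∧ g = y * v * y⁻¹ ∧ 2 * wordLength y + m ≤ n}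

lemma wordLength_inv (g : FG k) : wordLength g⁻¹ = wordLength g := by
  rw [wordLength, wordLength, FreeGroup.toWord_inv, FreeGroup.invRev_length]

lemma rotSet_wordLength {B : Set (FG k)} (hB : B ⊆ Cset k) {m : ℕ} {v : FG k}
    (hv : v ∈ rotSet B m) : wordLength v = m := by
  obtain ⟨u, hu, hum, r, _, rfl⟩ := hv
  have hcyc : IsCyclicallyReduced u := hB hu
  rw [wordLength, toWord_mk_rotate hcyc r, List.length_rotate]
  exact hum

lemma rotSet_sub_ball {B : Set (FG k)} (hB : B ⊆ Cset k) (m : ℕ) :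
    rotSet B m ⊆ ball k m := fun v hv => le_of_eq (rotSet_wordLength hB hv)

lemma wordLength_eq_norm (g : FG k) : wordLength g = FreeGroup.norm g := rfl

lemma conjStr_sub_ball {B : Set (FG k)} (hB : B ⊆ Cset k) (n m : ℕ) :
    conjStr B n m ⊆ ball k n := by
  rintro g ⟨y, v, hv, rfl, hlen⟩
  have hvm : wordLength v = m := rotSet_wordLength hB hv
  have h1 : wordLength (y * v * y⁻¹) ≤ wordLength (y * v) + wordLength y⁻¹ :=
    FreeGroup.norm_mul_le _ _
  have h2 : wordLength (y * v) ≤ wordLength y + wordLength v := FreeGroup.norm_mul_le _ _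
  have h3 : wordLength y⁻¹ = wordLength y := wordLength_inv y
  show wordLength (y * v * y⁻¹) ≤ n
  omega

lemma cover {B : Set (FG k)} (hB : B ⊆ Cset k) (n : ℕ) :
    {g | g ∈ conjSet B ∧ wordLength g ≤ n} ⊆ ⋃ m ∈ Finset.range (n+1), conjStr B n m := by
  rintro g ⟨⟨x, u, hu, rfl⟩, hlen⟩
  have hcyc : IsCyclicallyReduced u := hB hu
  obtain ⟨y, r, heq, hword⟩ := conj_form x u hcyc
  set m := wordLength u with hm
  have hlens : wordLength (x * u * x⁻¹) = 2 * wordLength y + m := by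
    have h := congrArg List.length hword
    rw [List.length_append, List.length_append, List.length_rotate] at h
    have h2 : (FreeGroup.toWord y⁻¹).length = wordLength y := wordLength_inv y
    have h3 : (FreeGroup.toWord y).length = wordLength y := rfl
    have h4 : (FreeGroup.toWord u).length = m := rfl
    have h5 : (FreeGroup.toWord (x * u * x⁻¹)).length = wordLength (x*u*x⁻¹) := rfl
    omega
  have hmn : m ≤ n := by omega
  -- normalize the rotation amount
  have hrr : ∃ r', r' ≤ m ∧ (FreeGroup.toWord u).rotate r' = (FreeGroup.toWord u).rotate r := by
    rcases Nat.eq_zero_or_pos m with h0 | hpos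
    · refine ⟨0, Nat.zero_le m, ?_⟩
      have hul : (FreeGroup.toWord u).length = 0 := h0
      rw [List.length_eq_zero_iff.1 hul]
      simp
    · refine ⟨r % m, le_of_lt (Nat.mod_lt _ hpos), ?_⟩
      have hlu : (FreeGroup.toWord u).length = m := rfl
      conv_lhs => rw [← hlu]
      exact List.rotate_mod _ r
  obtain ⟨r', hr'le, hr'eq⟩ := hrr
  apply Set.mem_biUnion (Finset.mem_range.2 (Nat.lt_succ_of_le hmn))
  exact ⟨y, FreeGroup.mk ((FreeGroup.toWord u).rotate r),
    ⟨u, hu, rfl, r', hr'le, by rw [hr'eq]⟩, heq, by omega⟩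

lemma rotSet_card {B : Set (FG k)} (m : ℕ) :
    (rotSet B m).ncard ≤ (m+1) * rhoC B m := by
  classical
  have hfinB : {g | g ∈ B ∧ wordLength g ≤ m}.Finite :=
    finite_sub_ball (fun g hg => hg.2)
  have hfinR : (rotSet B m).Finite := by
    apply finite_sub_ball (n := m)
    rintro v ⟨u, hu, hum, r, hr, rfl⟩
    show wordLength (FreeGroup.mk ((FreeGroup.toWord u).rotate r)) ≤ m
    calc wordLength (FreeGroup.mk ((FreeGroup.toWord u).rotate r))
        ≤ ((FreeGroup.toWord u).rotate r).length := by
          rw [wordLength, FreeGroup.toWord_mk]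
          exact FreeGroup.Red.length_le FreeGroup.reduce.red
      _ = m := by rw [List.length_rotate]; exact hum
  have : Finite (rotSet B m) := hfinR.to_subtype
  have : Finite {g | g ∈ B ∧ wordLength g ≤ m} := hfinB.to_subtype
  let F : rotSet B m → {g | g ∈ B ∧ wordLength g ≤ m} × Fin (m+1) := fun v => by
    have hv := v.2
    refine ⟨⟨Classical.choose hv, ?_⟩, ⟨Classical.choose (Classical.choose_spec hv).2.2, ?_⟩⟩
    · obtain ⟨hu, hum, _⟩ := Classical.choose_spec hv
      exact ⟨hu, le_of_eq hum⟩
    · obtain ⟨hu, hum, hr⟩ := Classical.choose_spec hv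
      exact Nat.lt_succ_of_le (Classical.choose_spec hr).1
  have hinj : Function.Injective F := by
    intro v1 v2 h
    have e1 := (Classical.choose_spec (Classical.choose_spec v1.2).2.2).2
    have e2 := (Classical.choose_spec (Classical.choose_spec v2.2).2.2).2
    have hu12 : Classical.choose v1.2 = Classical.choose v2.2 :=
      congrArg (fun z => (z.1 : FG k)) h
    have hr12 : (Classical.choose (Classical.choose_spec v1.2).2.2 : ℕ) =
        Classical.choose (Classical.choose_spec v2.2).2.2 := by
      have := congrArg (fun z => (z.2 : Fin (m+1))) h
      exact congrArg Fin.val this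
    apply Subtype.ext
    rw [e1, e2]
    exact congrArg₂ (fun (u : FG k) (r : ℕ) => FreeGroup.mk ((FreeGroup.toWord u).rotate r))
      hu12 hr12
  calc (rotSet B m).ncard = Nat.card (rotSet B m) := (Nat.card_coe_set_eq _).symm
    _ ≤ Nat.card ({g | g ∈ B ∧ wordLength g ≤ m} × Fin (m+1)) :=
        Nat.card_le_card_of_injective F hinj
    _ = rhoC B m * (m+1) := by
        rw [Nat.card_prod, Nat.card_coe_set_eq, Nat.card_eq_fintype_card, Fintype.card_fin]
        rfl
    _ = (m+1) * rhoC B m := Nat.mul_comm _ _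

lemma conjStr_card {B : Set (FG k)} (hB : B ⊆ Cset k) (n m : ℕ) :
    (conjStr B n m).ncard ≤ (ball k ((n-m)/2)).ncard * (rotSet B m).ncard := by
  classical
  have hfinC : (conjStr B n m).Finite := finite_sub_ball (conjStr_sub_ball hB n m)
  have hfinBall : (ball k ((n-m)/2)).Finite := finite_ball _ _
  have hfinR : (rotSet B m).Finite := by
    apply finite_sub_ball (rotSet_sub_ball hB m)
  have : Finite (conjStr B n m) := hfinC.to_subtype
  have : Finite (ball k ((n-m)/2)) := hfinBall.to_subtype
  have : Finite (rotSet B m) := hfinR.to_subtype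
  let F : conjStr B n m → ball k ((n-m)/2) × rotSet B m := fun g => by
    have hg := g.2
    refine ⟨⟨Classical.choose hg, ?_⟩, ⟨Classical.choose (Classical.choose_spec hg), ?_⟩⟩
    · obtain ⟨hv, hgeq, hlen⟩ := Classical.choose_spec (Classical.choose_spec hg)
      show wordLength _ ≤ (n-m)/2
      omega
    · exact (Classical.choose_spec (Classical.choose_spec hg)).1
  have hinj : Function.Injective F := by
    intro g1 g2 h
    have e1 := (Classical.choose_spec (Classical.choose_spec g1.2)).2.1
    have e2 := (Classical.choose_spec (Classical.choose_spec g2.2)).2.1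
    have hy : Classical.choose g1.2 = Classical.choose g2.2 :=
      congrArg (fun z => (z.1 : FG k)) h
    have hv : Classical.choose (Classical.choose_spec g1.2) =
        Classical.choose (Classical.choose_spec g2.2) :=
      congrArg (fun z => (z.2 : FG k)) h
    apply Subtype.ext
    rw [e1, e2]
    exact congrArg₂ (fun (y v : FG k) => y * v * y⁻¹) hy hv
  calc (conjStr B n m).ncard = Nat.card (conjStr B n m) := (Nat.card_coe_set_eq _).symm
    _ ≤ Nat.card (ball k ((n-m)/2) × rotSet B m) := Nat.card_le_card_of_injective F hinj
    _ = (ball k ((n-m)/2)).ncard * (rotSet B m).ncard := by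
        rw [Nat.card_prod, Nat.card_coe_set_eq, Nat.card_coe_set_eq]

lemma ncard_biUnion_le {α : Type*} (f : ℕ → Set α) (n : ℕ) :
    (⋃ m ∈ Finset.range n, f m).ncard ≤ ∑ m ∈ Finset.range n, (f m).ncard := by
  classical
  induction n with
  | zero => simp
  | succ n ih =>
    rw [Finset.range_add_one, Finset.set_biUnion_insert, Finset.sum_insert Finset.notMem_range_self]
    calc (f n ∪ ⋃ m ∈ Finset.range n, f m).ncard
        ≤ (f n).ncard + (⋃ m ∈ Finset.range n, f m).ncard := Set.ncard_union_le _ _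
      _ ≤ (f n).ncard + ∑ m ∈ Finset.range n, (f m).ncard := by omega

lemma rho_conj_le {B : Set (FG k)} (hB : B ⊆ Cset k) (n : ℕ) :
    rhoC (conjSet B) n ≤
      ∑ m ∈ Finset.range (n+1), (ball k ((n-m)/2)).ncard * ((m+1) * rhoC B m) := by
  have hsub := cover hB n
  have hfin : (⋃ m ∈ Finset.range (n+1), conjStr B n m).Finite := by
    apply Set.Finite.biUnion (Finset.range (n+1)).finite_toSet
    intro m _
    exact finite_sub_ball (conjStr_sub_ball hB n m)
  calc rhoC (conjSet B) n ≤ (⋃ m ∈ Finset.range (n+1), conjStr B n m).ncard :=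
        Set.ncard_le_ncard hsub hfin
    _ ≤ ∑ m ∈ Finset.range (n+1), (conjStr B n m).ncard := ncard_biUnion_le _ _
    _ ≤ ∑ m ∈ Finset.range (n+1), (ball k ((n-m)/2)).ncard * ((m+1) * rhoC B m) := by
        apply Finset.sum_le_sum
        intro m _
        calc (conjStr B n m).ncard ≤ (ball k ((n-m)/2)).ncard * (rotSet B m).ncard :=
              conjStr_card hB n m
          _ ≤ (ball k ((n-m)/2)).ncard * ((m+1) * rhoC B m) :=
              Nat.mul_le_mul_left _ (rotSet_card m)

/-! ### Real-number estimates -/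

lemma absorb (C q : ℝ) (hC : 0 ≤ C) (hq0 : 0 < q) (hq1 : q < 1) :
    ∃ K σ : ℝ, 0 < K ∧ 0 < σ ∧ σ < 1 ∧ ∀ n : ℕ, C * (n+1)^4 * q^n ≤ K * σ^n := by
  set σ := (1+q)/2 with hσ
  have hσ0 : 0 < σ := by rw [hσ]; linarith
  have hσ1 : σ < 1 := by rw [hσ]; linarith
  have hqσ : q < σ := by rw [hσ]; linarith
  set r := q/σ with hr
  have hr0 : 0 < r := div_pos hq0 hσ0
  have hr1 : r < 1 := (div_lt_one hσ0).2 hqσ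
  have hsum : Summable (fun n : ℕ => (n:ℝ)^4 * r^n) :=
    summable_pow_mul_geometric_of_norm_lt_one 4 (by rw [Real.norm_eq_abs, abs_of_pos hr0]; exact hr1)
  have htend := hsum.tendsto_atTop_zero
  obtain ⟨M, hM⟩ := htend.bddAbove_range
  have hMmem : ∀ j : ℕ, (j:ℝ)^4 * r^j ≤ M := fun j => hM ⟨j, rfl⟩
  have hM0 : 0 ≤ M := le_trans (by norm_num) (hMmem 0)
  refine ⟨C * M * r⁻¹ + 1, σ, by positivity, hσ0, hσ1, ?_⟩
  intro n
  have hqrs : q = r * σ := by rw [hr]; field_simp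
  have key : ((n:ℝ)+1)^4 * r^n ≤ M * r⁻¹ := by
    have h1 := hMmem (n+1)
    have h2 : ((n+1:ℕ):ℝ)^4 * r^(n+1) = (((n:ℝ)+1)^4 * r^n) * r := by
      push_cast
      ring
    rw [h2] at h1
    calc ((n:ℝ)+1)^4 * r^n = (((n:ℝ)+1)^4 * r^n * r) * r⁻¹ := by
          field_simp
      _ ≤ M * r⁻¹ := by
          apply mul_le_mul_of_nonneg_right h1 (by positivity)
  calc C * (n+1)^4 * q^n = C * (((n:ℝ)+1)^4 * r^n) * σ^n := by
        rw [hqrs, mul_pow]; ring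
    _ ≤ C * (M * r⁻¹) * σ^n := by
        apply mul_le_mul_of_nonneg_right _ (by positivity)
        exact mul_le_mul_of_nonneg_left key hC
    _ ≤ (C * M * r⁻¹ + 1) * σ^n := by
        apply mul_le_mul_of_nonneg_right _ (by positivity)
        linarith
    _ = (C * M * r⁻¹ + 1) * σ^n := rfl

lemma rhoC_univ_eq_ball (n : ℕ) : rhoC (Set.univ : Set (FG k)) n = (ball k n).ncard := by
  unfold rhoC ball
  congr 1
  ext g
  simp

lemma main_count (hk : 2 ≤ k) (B : Set (FG k)) (hB : B ⊆ Cset k)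
    (K σ : ℝ) (hK : 0 < K) (hσ0 : 0 < σ) (hσ1 : σ < 1)
    (hbound : ∀ n, (rhoC B n : ℝ) ≤ K * σ^n * rhoC (Cset k) n) :
    ∃ K' σ' : ℝ, 0 < K' ∧ 0 < σ' ∧ σ' < 1 ∧
      ∀ n, (rhoC (conjSet B) n : ℝ) ≤ K' * σ'^n * rhoC (Set.univ : Set (FG k)) n := by
  have hk1 : 1 ≤ k := by omega
  set Kb : ℝ := ((2*k-1 : ℕ) : ℝ) with hKb
  have hKb3 : (3:ℝ) ≤ Kb := by
    rw [hKb]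
    have : 3 ≤ 2*k-1 := by omega
    exact_mod_cast this
  have hKb0 : (0:ℝ) < Kb := by linarith
  set s := Real.sqrt Kb with hs
  have hs1 : 1 < s := by
    rw [hs, ← Real.sqrt_one]
    exact Real.sqrt_lt_sqrt (by norm_num) (by linarith)
  have hs0 : 0 < s := by linarith
  have hsq : s^2 = Kb := Real.sq_sqrt hKb0.le
  set q : ℝ := max s⁻¹ σ with hq
  have hq0 : 0 < q := lt_of_lt_of_le hσ0 (le_max_right _ _)
  have hinv1 : s⁻¹ < 1 := by
    rw [inv_eq_one_div]
    exact (div_lt_one (by linarith)).2 hs1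
  have hq1 : q < 1 := max_lt hinv1 hσ1
  have hqs : 1 ≤ q * s := by
    have h1 : s⁻¹ ≤ q := le_max_left _ _
    calc (1:ℝ) = s⁻¹ * s := by field_simp
      _ ≤ q * s := mul_le_mul_of_nonneg_right h1 hs0.le
  set C1 : ℝ := 2*k+1 with hC1
  have hC10 : 0 < C1 := by positivity
  set C2 : ℝ := C1^2 * K with hC2
  have hC20 : 0 < C2 := by positivity
  -- pointwise bound on the sum
  have hmain : ∀ n, (rhoC (conjSet B) n : ℝ) ≤ C2 * (n+1)^4 * q^n * Kb^n := by
    intro n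
    have h1 : (rhoC (conjSet B) n : ℝ) ≤
        ∑ m ∈ Finset.range (n+1),
          ((ball k ((n-m)/2)).ncard : ℝ) * ((m+1) * rhoC B m) := by
      have := rho_conj_le hB n
      calc (rhoC (conjSet B) n : ℝ)
          ≤ ((∑ m ∈ Finset.range (n+1), (ball k ((n-m)/2)).ncard * ((m+1) * rhoC B m) : ℕ) : ℝ) :=
            Nat.cast_le.2 this
        _ = _ := by
            push_cast
            apply Finset.sum_congr rfl
            intro m _
            ring
    have hterm : ∀ m ∈ Finset.range (n+1),
        ((ball k ((n-m)/2)).ncard : ℝ) * ((m+1) * rhoC B m) ≤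
          C2 * (n+1)^3 * (q^n * Kb^n) := by
      intro m hm
      have hmn : m ≤ n := Nat.lt_succ_iff.1 (Finset.mem_range.1 hm)
      -- ball bound
      have hball : ∀ j : ℕ, j ≤ n → ((ball k j).ncard : ℝ) ≤ C1 * (n+1) * Kb^j := by
        intro j hj
        calc ((ball k j).ncard : ℝ) ≤ ((2*k*(j+1)+1) * (2*k-1)^j : ℕ) :=
              Nat.cast_le.2 (ball_upper hk1 j)
          _ = ((2*k*(j+1)+1 : ℕ) : ℝ) * Kb^j := by push_cast; ring
          _ ≤ (C1 * (n+1)) * Kb^j := by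
              apply mul_le_mul_of_nonneg_right _ (by positivity)
              rw [hC1]
              push_cast
              have : (j:ℝ) ≤ n := Nat.cast_le.2 hj
              nlinarith [Nat.cast_nonneg (α := ℝ) k, Nat.cast_nonneg (α := ℝ) j]
      -- pow bound : Kb^((n-m)/2) ≤ s^(n-m)
      have hpow : Kb^((n-m)/2) ≤ s^(n-m) := by
        rw [← hsq, ← pow_mul]
        apply pow_le_pow_right₀ hs1.le
        omega
      -- rho bound
      have hrho : (rhoC B m : ℝ) ≤ K * σ^m * (C1 * (n+1) * Kb^m) := by
        calc (rhoC B m : ℝ) ≤ K * σ^m * rhoC (Cset k) m := hbound m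
          _ ≤ K * σ^m * (C1 * (n+1) * Kb^m) := by
              apply mul_le_mul_of_nonneg_left _ (by positivity)
              calc (rhoC (Cset k) m : ℝ) ≤ ((ball k m).ncard : ℝ) := by
                    apply Nat.cast_le.2
                    apply Set.ncard_le_ncard _ (finite_ball k m)
                    intro g hg
                    exact hg.2
                _ ≤ C1 * (n+1) * Kb^m := hball m hmn
      -- exponent juggling: s^(n-m) * σ^m * Kb^m ≤ q^n * Kb^n
      have hexp : s^(n-m) * (σ^m * Kb^m) ≤ q^n * Kb^n := by
        have e1 : σ^m ≤ q^m := pow_le_pow_left₀ hσ0.le (le_max_right _ _) m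
        have e2 : s^(n-m) * (σ^m * Kb^m) ≤ q^m * (s^(n-m) * Kb^m) := by
          calc s^(n-m) * (σ^m * Kb^m) ≤ s^(n-m) * (q^m * Kb^m) := by
                apply mul_le_mul_of_nonneg_left _ (by positivity)
                exact mul_le_mul_of_nonneg_right e1 (by positivity)
            _ = q^m * (s^(n-m) * Kb^m) := by ring
        have e3 : s^(n-m) * Kb^m = s^(n+m) := by
          rw [← hsq, ← pow_mul, ← pow_add]
          congr 1
          omega
        have e4 : q^n * Kb^n = (q^m * s^(n+m)) * ((q*s)^(n-m)) := by
          have h1' : q^n = q^m * q^(n-m) := by rw [← pow_add]; congr 1; omega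
          have h2' : Kb^n = s^(n+m) * s^(n-m) := by
            rw [← hsq, ← pow_mul, ← pow_add]
            congr 1
            omega
          rw [h1', h2', mul_pow]
          ring
        rw [e4]
        calc s^(n-m) * (σ^m * Kb^m) ≤ q^m * s^(n+m) := by rw [← e3]; exact e2
          _ = (q^m * s^(n+m)) * 1 := by ring
          _ ≤ (q^m * s^(n+m)) * ((q*s)^(n-m)) := by
              apply mul_le_mul_of_nonneg_left _ (by positivity)
              exact one_le_pow₀ hqs
      -- put it together
      calc ((ball k ((n-m)/2)).ncard : ℝ) * ((m+1) * rhoC B m)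
          ≤ (C1 * (n+1) * Kb^((n-m)/2)) * ((m+1) * (K * σ^m * (C1 * (n+1) * Kb^m))) := by
            apply mul_le_mul (hball _ (by omega)) _ (by positivity) (by positivity)
            apply mul_le_mul_of_nonneg_left hrho (by positivity)
          _ ≤ (C1 * (n+1) * s^(n-m)) * (((n:ℝ)+1) * (K * σ^m * (C1 * (n+1) * Kb^m))) := by
            apply mul_le_mul
            · exact mul_le_mul_of_nonneg_left hpow (by positivity)
            · apply mul_le_mul_of_nonneg_right _ (by positivity)
              push_cast
              have : (m:ℝ) ≤ n := Nat.cast_le.2 hmn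
              linarith
            · positivity
            · positivity
          _ = C2 * (n+1)^3 * (s^(n-m) * (σ^m * Kb^m)) := by
            rw [hC2, hC1]
            ring
          _ ≤ C2 * (n+1)^3 * (q^n * Kb^n) := by
            apply mul_le_mul_of_nonneg_left hexp (by positivity)
    calc (rhoC (conjSet B) n : ℝ)
        ≤ ∑ m ∈ Finset.range (n+1),
            ((ball k ((n-m)/2)).ncard : ℝ) * ((m+1) * rhoC B m) := h1
      _ ≤ ∑ m ∈ Finset.range (n+1), C2 * (n+1)^3 * (q^n * Kb^n) :=
          Finset.sum_le_sum hterm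
      _ = (n+1) * (C2 * (n+1)^3 * (q^n * Kb^n)) := by
          rw [Finset.sum_const, Finset.card_range]
          push_cast
          ring
      _ = C2 * (n+1)^4 * q^n * Kb^n := by ring
  -- get rid of Kb^n using the lower bound of the ball
  have hlow : ∀ n : ℕ, Kb^n ≤ (rhoC (Set.univ : Set (FG k)) n : ℝ) := by
    intro n
    rw [rhoC_univ_eq_ball]
    calc Kb^n = (((2*k-1)^n : ℕ) : ℝ) := by rw [hKb]; push_cast; ring
      _ ≤ _ := Nat.cast_le.2 (ball_lower hk1 n)
  obtain ⟨K', σ', hK', hσ'0, hσ'1, habs⟩ := absorb C2 q hC20.le hq0 hq1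
  refine ⟨K', σ', hK', hσ'0, hσ'1, ?_⟩
  intro n
  calc (rhoC (conjSet B) n : ℝ) ≤ C2 * (n+1)^4 * q^n * Kb^n := hmain n
    _ ≤ (K' * σ'^n) * Kb^n := by
        apply mul_le_mul_of_nonneg_right _ (by positivity)
        exact habs n
    _ ≤ (K' * σ'^n) * rhoC (Set.univ : Set (FG k)) n := by
        apply mul_le_mul_of_nonneg_left (hlow n) (by positivity)
    _ = K' * σ'^n * rhoC (Set.univ : Set (FG k)) n := rfl

/-! ### Final assembly -/

lemma one_mem_Cset : (1 : FG k) ∈ Cset k := by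
  show CyclicallyReducedWord (FreeGroup.toWord (1 : FG k))
  rfl

lemma rho_finite (S : Set (FG k)) (n : ℕ) : {g ∈ S | wordLength g ≤ n}.Finite :=
  finite_sub_ball (fun g hg => hg.2)

lemma rho_pos {S : Set (FG k)} (h1 : (1:FG k) ∈ S) (n : ℕ) : 0 < rhoC S n := by
  rw [rhoC, Set.ncard_pos (rho_finite S n)]
  exact ⟨1, h1, by rw [wordLength]; simp⟩

lemma rho_mono {X S : Set (FG k)} (h : X ⊆ S) (n : ℕ) : rhoC X n ≤ rhoC S n :=
  Set.ncard_le_ncard (fun g hg => ⟨h hg.1, hg.2⟩) (rho_finite S n)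

lemma rho_partition {X S : Set (FG k)} (hX : X ⊆ S) (n : ℕ) :
    rhoC X n + rhoC (S \ X) n = rhoC S n := by
  unfold rhoC
  rw [← Set.ncard_union_eq ?disj (rho_finite X n) (rho_finite _ n)]
  case disj =>
    rw [Set.disjoint_left]
    rintro g ⟨hg, -⟩ ⟨⟨-, hg2⟩, -⟩
    exact hg2 hg
  congr 1
  ext g
  constructor
  · rintro (⟨h1, h2⟩ | ⟨⟨h1, -⟩, h2⟩)
    · exact ⟨hX h1, h2⟩
    · exact ⟨h1, h2⟩
  · rintro ⟨h1, h2⟩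
    by_cases hg : g ∈ X
    · exact Or.inl ⟨hg, h2⟩
    · exact Or.inr ⟨⟨h1, hg⟩, h2⟩

lemma ratio_helper {a b c : ℝ} (hc : 0 < c) (hab : a + b = c) (hb : 0 ≤ b) :
    |1 - a / c| = b / c := by
  have h1 : 1 - a / c = b / c := by
    field_simp
    linarith
  rw [h1, abs_of_nonneg (div_nonneg hb hc.le)]

lemma cover_univ {A : Set (FG k)} (hA : A ⊆ Cset k) (n : ℕ) :
    rhoC (Set.univ : Set (FG k)) n ≤
      rhoC (conjSet A) n + rhoC (conjSet (Cset k \ A)) n := by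
  unfold rhoC
  have hsub : {g ∈ (Set.univ : Set (FG k)) | wordLength g ≤ n} ⊆
      {g ∈ conjSet A | wordLength g ≤ n} ∪ {g ∈ conjSet (Cset k \ A) | wordLength g ≤ n} := by
    rintro g ⟨-, hg⟩
    obtain ⟨x, u, hu, rfl⟩ := exists_core g
    by_cases huA : u ∈ A
    · exact Or.inl ⟨⟨x, u, huA, rfl⟩, hg⟩
    · exact Or.inr ⟨⟨x, u, ⟨hu, huA⟩, rfl⟩, hg⟩
  calc {g ∈ (Set.univ : Set (FG k)) | wordLength g ≤ n}.ncard
      ≤ ({g ∈ conjSet A | wordLength g ≤ n} ∪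
          {g ∈ conjSet (Cset k \ A) | wordLength g ≤ n}).ncard :=
        Set.ncard_le_ncard hsub ((rho_finite _ n).union (rho_finite _ n))
    _ ≤ _ := Set.ncard_union_le _ _

end KSS

open KSS

/-- if `A ⊆ C` and `A'` is the set of elements whose cyclically reduced
form lies in `A`, then exponential negligibility (resp. genericity) of `A` in `C`
implies exponential negligibility (resp. genericity) of `A'` in `F_k`. -/
theorem cyclic_form_transfer (k : ℕ) (hk : 2 ≤ k) (A : Set (FG k)) (hA : A ⊆ Cset k) :
    (ExpNegligibleIn A (Cset k) →
      ExpNegligibleIn {g : FG k | ∃ x u : FG k, u ∈ A ∧ g = x * u * x⁻¹}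
        (Set.univ : Set (FG k))) ∧
    (ExpGenericIn A (Cset k) →
      ExpGenericIn {g : FG k | ∃ x u : FG k, u ∈ A ∧ g = x * u * x⁻¹}
        (Set.univ : Set (FG k))) := by
  have hCpos : ∀ n, (0:ℝ) < (rhoC (Cset k) n : ℝ) := fun n =>
    Nat.cast_pos.2 (rho_pos one_mem_Cset n)
  have hUpos : ∀ n, (0:ℝ) < (rhoC (Set.univ : Set (FG k)) n : ℝ) := fun n =>
    Nat.cast_pos.2 (rho_pos (Set.mem_univ 1) n)
  constructor
  · -- negligible case
    rintro ⟨hsub, K, hK, σ, hσ0, hσ1, hb⟩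
    have hbound : ∀ n, (rhoC A n : ℝ) ≤ K * σ^n * rhoC (Cset k) n := by
      intro n
      have hpart : rhoC (Cset k \ A) n + rhoC A n = rhoC (Cset k) n := by
        have := rho_partition hA n
        omega
      have hpartR : ((rhoC (Cset k \ A) n : ℝ)) + (rhoC A n : ℝ) = (rhoC (Cset k) n : ℝ) := by
        exact_mod_cast hpart
      have heq := ratio_helper (hCpos n) hpartR (Nat.cast_nonneg _)
      have habs := hb n
      rw [heq] at habs
      rw [div_le_iff₀ (hCpos n)] at habs
      linarith
    obtain ⟨K', σ', hK', hσ'0, hσ'1, hmain⟩ :=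
      main_count hk A hA K σ hK hσ0 hσ1 hbound
    refine ⟨Set.diff_subset, K', hK', σ', hσ'0, hσ'1, ?_⟩
    intro n
    have hpart : rhoC {g : FG k | ∃ x u : FG k, u ∈ A ∧ g = x * u * x⁻¹} n +
        rhoC (Set.univ \ {g : FG k | ∃ x u : FG k, u ∈ A ∧ g = x * u * x⁻¹}) n =
        rhoC (Set.univ : Set (FG k)) n := rho_partition (Set.subset_univ _) n
    have hpartR : (rhoC (Set.univ \ {g : FG k | ∃ x u : FG k, u ∈ A ∧ g = x * u * x⁻¹}) n : ℝ) +
        (rhoC {g : FG k | ∃ x u : FG k, u ∈ A ∧ g = x * u * x⁻¹} n : ℝ) =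
        (rhoC (Set.univ : Set (FG k)) n : ℝ) := by
      exact_mod_cast (by omega : rhoC (Set.univ \ {g : FG k | ∃ x u : FG k, u ∈ A ∧ g = x * u * x⁻¹}) n +
        rhoC {g : FG k | ∃ x u : FG k, u ∈ A ∧ g = x * u * x⁻¹} n = rhoC (Set.univ : Set (FG k)) n)
    rw [ratio_helper (hUpos n) hpartR (Nat.cast_nonneg _)]
    rw [div_le_iff₀ (hUpos n)]
    exact hmain n
  · -- generic case
    rintro ⟨hsubA, K, hK, σ, hσ0, hσ1, hb⟩
    have hBsub : Cset k \ A ⊆ Cset k := Set.diff_subset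
    have hbound : ∀ n, (rhoC (Cset k \ A) n : ℝ) ≤ K * σ^n * rhoC (Cset k) n := by
      intro n
      have hpart := rho_partition hA n
      have hpartR : ((rhoC A n : ℝ)) + (rhoC (Cset k \ A) n : ℝ) = (rhoC (Cset k) n : ℝ) := by
        exact_mod_cast hpart
      have heq := ratio_helper (hCpos n) hpartR (Nat.cast_nonneg _)
      have habs := hb n
      rw [heq] at habs
      rw [div_le_iff₀ (hCpos n)] at habs
      linarith
    obtain ⟨K', σ', hK', hσ'0, hσ'1, hmain⟩ :=
      main_count hk (Cset k \ A) hBsub K σ hK hσ0 hσ1 hbound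
    refine ⟨Set.subset_univ _, K', hK', σ', hσ'0, hσ'1, ?_⟩
    intro n
    have hcov := cover_univ hA n
    have hle : rhoC {g : FG k | ∃ x u : FG k, u ∈ A ∧ g = x * u * x⁻¹} n ≤
        rhoC (Set.univ : Set (FG k)) n := rho_mono (Set.subset_univ _) n
    have hcovR : (rhoC (Set.univ : Set (FG k)) n : ℝ) ≤
        (rhoC (conjSet A) n : ℝ) + (rhoC (conjSet (Cset k \ A)) n : ℝ) := by
      exact_mod_cast hcov
    have hleR : (rhoC {g : FG k | ∃ x u : FG k, u ∈ A ∧ g = x * u * x⁻¹} n : ℝ) ≤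
        (rhoC (Set.univ : Set (FG k)) n : ℝ) := Nat.cast_le.2 hle
    have h1 : (rhoC {g : FG k | ∃ x u : FG k, u ∈ A ∧ g = x * u * x⁻¹} n : ℝ) /
        (rhoC (Set.univ : Set (FG k)) n : ℝ) ≤ 1 :=
      (div_le_one (hUpos n)).2 hleR
    rw [abs_of_nonneg (by linarith)]
    have hA'eq : (rhoC (conjSet A) n : ℝ) =
        (rhoC {g : FG k | ∃ x u : FG k, u ∈ A ∧ g = x * u * x⁻¹} n : ℝ) := rfl
    rw [hA'eq] at hcovR
    have hgen' : ∀ a c : ℝ, c ≠ 0 → 1 - a/c = (c-a)/c := by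
      intro a c hc
      field_simp
    have hfrac := hgen' (rhoC {g : FG k | ∃ x u : FG k, u ∈ A ∧ g = x * u * x⁻¹} n : ℝ)
      (rhoC (Set.univ : Set (FG k)) n : ℝ) (hUpos n).ne'
    rw [hfrac, div_le_iff₀ (hUpos n)]
    have hmain' := hmain n
    linarith
end
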